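/- arXiv:2603.06747 — 5 statements merged into one kernel-verified Lean document; each statement's English description precedes it below -/
import Mathlib

section
/- Let G be a connected simple graph with at least one edge. Then AT(G) = 2 if and only if the core of G is either the one-vertex graph K1 or an even cycle C_{2m+2} for some m ≥ 1. -/
open scoped Classical

/-- The outdegree of a vertex `v` in a finite set of arcs `A`. -/
noncomputable def arcOutDeg {V : Type*} (A : Finset (V × V)) (v : V) : ℕ :=
  (A.filter fun a => a.1 = v).card

/-- The indegree of a vertex `v` in a finite set of arcs `A`. -/
noncomputable def arcInDeg {V : Type*} (A : Finset (V × V)) (v : V) : ℕ :=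
  (A.filter fun a => a.2 = v).card

/-- `A` is an orientation of the simple graph `G`: every arc of `A` joins adjacent
vertices, and every edge of `G` receives exactly one of its two possible directions. -/
def IsOrientation {V : Type*} (G : SimpleGraph V) (A : Finset (V × V)) : Prop :=
  (∀ a ∈ A, G.Adj a.1 a.2) ∧ ∀ u v : V, G.Adj u v → ((u, v) ∈ A ↔ (v, u) ∉ A)

/-- A set of arcs is Eulerian if at every vertex the indegree equals the outdegree. -/
def IsEulerianSub {V : Type*} (B : Finset (V × V)) : Prop :=
  ∀ v : V, arcInDeg B v = arcOutDeg B v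

/-- An orientation (given by its arc set `A`) is an Alon–Tarsi orientation if the number
of its even Eulerian sub-digraphs differs from the number of its odd Eulerian
sub-digraphs. -/
def IsATOrientation {V : Type*} (A : Finset (V × V)) : Prop :=
  (A.powerset.filter fun B => IsEulerianSub B ∧ Even B.card).card ≠
    (A.powerset.filter fun B => IsEulerianSub B ∧ ¬ Even B.card).card

/-- The Alon–Tarsi number of `G`: the least `k` such that `G` has an Alon–Tarsi
orientation with maximum outdegree at most `k - 1` (i.e. `< k`). -/
noncomputable def alonTarsiNumber {V : Type*} (G : SimpleGraph V) : ℕ :=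
  sInf {k : ℕ | ∃ A : Finset (V × V),
    IsOrientation G A ∧ IsATOrientation A ∧ ∀ v : V, arcOutDeg A v < k}

/-- A graph is `k`-degenerate if every nonempty (induced) subgraph has a vertex of
degree at most `k`. -/
def Degenerate {V : Type*} (k : ℕ) (G : SimpleGraph V) : Prop :=
  ∀ s : Finset V, s.Nonempty → ∃ v ∈ s, (s.filter fun u => G.Adj v u).card ≤ k

/-- The subdivision graph `S(G)`: each edge `uv` of `G` is replaced by a path `u-e-v`
through the new vertex `e` corresponding to `uv`. -/
def subdivisionGraph {V : Type*} (G : SimpleGraph V) : SimpleGraph (V ⊕ ↥G.edgeSet) :=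
  SimpleGraph.fromRel fun a b =>
    match a, b with
    | Sum.inl u, Sum.inr e => u ∈ (e : Sym2 V)
    | _, _ => False

/-- The graph `R(G)`: `G` together with, for each edge `uv`, a new vertex joined to
`u` and `v`. -/
def rGraph {V : Type*} (G : SimpleGraph V) : SimpleGraph (V ⊕ ↥G.edgeSet) :=
  SimpleGraph.fromRel fun a b =>
    match a, b with
    | Sum.inl u, Sum.inl v => G.Adj u v
    | Sum.inl u, Sum.inr e => u ∈ (e : Sym2 V)
    | _, _ => False

/-- The graph `Q(G)`: new vertices joined to the endpoints of their edges, and two new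
vertices joined iff the corresponding edges of `G` share an endpoint; original
vertices are pairwise nonadjacent. -/
def qGraph {V : Type*} (G : SimpleGraph V) : SimpleGraph (V ⊕ ↥G.edgeSet) :=
  SimpleGraph.fromRel fun a b =>
    match a, b with
    | Sum.inl u, Sum.inr e => u ∈ (e : Sym2 V)
    | Sum.inr e, Sum.inr f => e ≠ f ∧ ∃ u : V, u ∈ (e : Sym2 V) ∧ u ∈ (f : Sym2 V)
    | _, _ => False

/-- The total graph `T(G)`. -/
def tGraph {V : Type*} (G : SimpleGraph V) : SimpleGraph (V ⊕ ↥G.edgeSet) :=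
  SimpleGraph.fromRel fun a b =>
    match a, b with
    | Sum.inl u, Sum.inl v => G.Adj u v
    | Sum.inl u, Sum.inr e => u ∈ (e : Sym2 V)
    | Sum.inr e, Sum.inr f => e ≠ f ∧ ∃ u : V, u ∈ (e : Sym2 V) ∧ u ∈ (f : Sym2 V)
    | _, _ => False

/-- The `F`-sum construction: given a graph `K` on `V ⊕ E` (playing the role of `F(G)`,
whose "original" vertices are those of the form `Sum.inl u`) and a graph `H` on `W`,
two vertices `(u₁, u₂)` and `(v₁, v₂)` are adjacent iff either `u₁ = v₁` is an original
vertex and `u₂v₂ ∈ E(H)`, or `u₂ = v₂` and `u₁v₁ ∈ E(K)`. -/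
def fSum {V E W : Type*} (K : SimpleGraph (V ⊕ E)) (H : SimpleGraph W) :
    SimpleGraph ((V ⊕ E) × W) :=
  SimpleGraph.fromRel fun a b =>
    (a.1 = b.1 ∧ (∃ u : V, a.1 = Sum.inl u) ∧ H.Adj a.2 b.2) ∨
      (a.2 = b.2 ∧ K.Adj a.1 b.1)

/-- The `S`-sum `G +_S H`. -/
def sSum {V W : Type*} (G : SimpleGraph V) (H : SimpleGraph W) :
    SimpleGraph ((V ⊕ ↥G.edgeSet) × W) :=
  fSum (subdivisionGraph G) H

/-- The `R`-sum `G +_R H`. -/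
def rSum {V W : Type*} (G : SimpleGraph V) (H : SimpleGraph W) :
    SimpleGraph ((V ⊕ ↥G.edgeSet) × W) :=
  fSum (rGraph G) H

/-- The `Q`-sum `G +_Q H`. -/
def qSum {V W : Type*} (G : SimpleGraph V) (H : SimpleGraph W) :
    SimpleGraph ((V ⊕ ↥G.edgeSet) × W) :=
  fSum (qGraph G) H

/-- The `T`-sum `G +_T H`. -/
def tSum {V W : Type*} (G : SimpleGraph V) (H : SimpleGraph W) :
    SimpleGraph ((V ⊕ ↥G.edgeSet) × W) :=
  fSum (tGraph G) H

/-- The star graph `S_n = K_{1,n}`. -/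
def starGraph (n : ℕ) : SimpleGraph (Fin 1 ⊕ Fin n) :=
  completeBipartiteGraph (Fin 1) (Fin n)

/-- The vertex set of the core (2-core) of `G`: the union of all vertex sets inducing a
subgraph of minimum degree at least 2.  Repeatedly deleting vertices of degree at most 1
leaves exactly the induced subgraph on this set; for a tree this set is empty and the
core is the one-vertex graph `K₁`. -/
noncomputable def twoCoreSet {V : Type*} [Fintype V] (G : SimpleGraph V) : Finset V :=
  Finset.univ.filter fun v => ∃ S : Finset V,
    (∀ u ∈ S, 2 ≤ (S.filter fun w => G.Adj u w).card) ∧ v ∈ S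

/-!
`AT(G) ≥ 2` as soon as `G` has an edge, so `AT(G) = 2` means that `G` has an Alon–Tarsi
orientation of maximum outdegree `1`. The vertices of an Eulerian subdigraph span a subgraph
of minimum degree `2`, so every Eulerian subdigraph lies in the core.

If the core is empty or an even cycle, orient the core cyclically and peel off the remaining
vertices one at a time, each having at most one neighbour among those not yet peeled, orienting
its edges away from it. The outdegree stays at most `1`, and the only Eulerian subdigraphs
are `∅` and the (even) core cycle.

Conversely, in an orientation of maximum outdegree `1` the core carries at most as many arcs as
vertices, while minimum degree `2` forces at least as many; hence every core vertex has in- and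
outdegree `1` inside the core, and the core arcs are the graph of a permutation `f` of the core.
Every edge of `G` joins some `v` to `f v`, so in a connected graph any two forward orbits meet
and the core is a single directed cycle. Its Eulerian subdigraphs are `∅` and the cycle itself,
so the orientation is Alon–Tarsi iff the cycle is even.
-/

open Finset

lemma Finset.eq_one_of_sum_eq_of_le_one {ι : Type*} {s : Finset ι} {f g : ι → ℕ}
    (hf : ∀ i ∈ s, f i ≤ 1) (hfg : ∀ i ∈ s, 2 ≤ f i + g i)
    (hsum : ∑ i ∈ s, f i = ∑ i ∈ s, g i) {i : ι} (hi : i ∈ s) : f i = 1 ∧ g i = 1 := by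
  have hf_le : ∑ i ∈ s, f i ≤ ∑ _i ∈ s, 1 := sum_le_sum hf
  have hfg_ge : ∑ _i ∈ s, 2 ≤ ∑ i ∈ s, (f i + g i) := sum_le_sum hfg
  simp only [sum_const, smul_eq_mul, mul_one, sum_add_distrib] at hf_le hfg_ge
  have hg : ∀ i ∈ s, 1 ≤ g i := fun i hi => by have := hf i hi; have := hfg i hi; omega
  have hf_eq : ∑ i ∈ s, f i = ∑ _i ∈ s, 1 := by simp only [sum_const, smul_eq_mul]; omega
  have hg_eq : ∑ _i ∈ s, 1 = ∑ i ∈ s, g i := by simp only [sum_const, smul_eq_mul]; omega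
  exact ⟨(sum_eq_sum_iff_of_le hf).mp hf_eq i hi,
    ((sum_eq_sum_iff_of_le hg).mp hg_eq i hi).symm⟩

namespace SimpleGraph

variable {V : Type*}

def restrictTo (G : SimpleGraph V) (T : Finset V) : SimpleGraph V where
  Adj u v := G.Adj u v ∧ u ∈ T ∧ v ∈ T
  symm.symm _ _ h := ⟨h.1.symm, h.2.2, h.2.1⟩
  loopless.irrefl _ h := G.irrefl h.1

@[simp]
lemma restrictTo_adj {G : SimpleGraph V} {T : Finset V} {u v : V} :
    (G.restrictTo T).Adj u v ↔ G.Adj u v ∧ u ∈ T ∧ v ∈ T := Iff.rfl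

@[simp]
lemma restrictTo_univ [Fintype V] (G : SimpleGraph V) : G.restrictTo univ = G := by
  ext; simp

end SimpleGraph

section Arcs

variable {V : Type*} {A B : Finset (V × V)} {u v w : V}

lemma one_le_arcOutDeg_of_mem (h : (u, v) ∈ A) : 1 ≤ arcOutDeg A u :=
  card_pos.mpr ⟨(u, v), mem_filter.mpr ⟨h, rfl⟩⟩

lemma one_le_arcInDeg_of_mem (h : (u, v) ∈ A) : 1 ≤ arcInDeg A v :=
  card_pos.mpr ⟨(u, v), mem_filter.mpr ⟨h, rfl⟩⟩

lemma exists_mem_of_one_le_arcOutDeg (h : 1 ≤ arcOutDeg A u) : ∃ v, (u, v) ∈ A := by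
  obtain ⟨a, hmem⟩ := card_pos.mp h
  obtain ⟨haA, rfl⟩ := mem_filter.mp hmem
  exact ⟨a.2, haA⟩

lemma exists_mem_of_one_le_arcInDeg (h : 1 ≤ arcInDeg A v) : ∃ u, (u, v) ∈ A := by
  obtain ⟨a, hmem⟩ := card_pos.mp h
  obtain ⟨haA, rfl⟩ := mem_filter.mp hmem
  exact ⟨a.1, haA⟩

lemma eq_of_arcOutDeg_le_one (hA : arcOutDeg A u ≤ 1) (hv : (u, v) ∈ A) (hw : (u, w) ∈ A) :
    v = w :=
  congrArg Prod.snd <|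
    card_le_one.mp hA _ (mem_filter.mpr ⟨hv, rfl⟩) _ (mem_filter.mpr ⟨hw, rfl⟩)

lemma eq_of_arcInDeg_le_one (hA : arcInDeg A w ≤ 1) (hu : (u, w) ∈ A) (hv : (v, w) ∈ A) :
    u = v :=
  congrArg Prod.fst <|
    card_le_one.mp hA _ (mem_filter.mpr ⟨hu, rfl⟩) _ (mem_filter.mpr ⟨hv, rfl⟩)

lemma arcOutDeg_eq_zero (h : ∀ a ∈ A, a.1 ≠ v) : arcOutDeg A v = 0 :=
  card_eq_zero.mpr <| filter_eq_empty_iff.mpr h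

lemma arcOutDeg_mono (h : A ⊆ B) (v : V) : arcOutDeg A v ≤ arcOutDeg B v :=
  card_le_card (filter_subset_filter _ h)

lemma arcOutDeg_union_le (A B : Finset (V × V)) (v : V) :
    arcOutDeg (A ∪ B) v ≤ arcOutDeg A v + arcOutDeg B v := by
  simpa only [arcOutDeg, filter_union] using card_union_le _ _

lemma sum_arcOutDeg {C : Finset V} (h : ∀ a ∈ A, a.1 ∈ C) : ∑ v ∈ C, arcOutDeg A v = #A :=
  (card_eq_sum_card_fiberwise h).symm

lemma sum_arcInDeg {C : Finset V} (h : ∀ a ∈ A, a.2 ∈ C) : ∑ v ∈ C, arcInDeg A v = #A :=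
  (card_eq_sum_card_fiberwise h).symm

lemma arcOutDeg_eq_card [Fintype V] (A : Finset (V × V)) (u : V) :
    arcOutDeg A u = #{v | (u, v) ∈ A} := by
  rw [arcOutDeg, ← card_image_of_injective {v | (u, v) ∈ A} (Prod.mk_right_injective u)]
  congr 1
  ext ⟨x, y⟩
  aesop

lemma arcInDeg_eq_card [Fintype V] (A : Finset (V × V)) (v : V) :
    arcInDeg A v = #{u | (u, v) ∈ A} := by
  rw [arcInDeg, ← card_image_of_injective {u | (u, v) ∈ A} (Prod.mk_left_injective v)]
  congr 1
  ext ⟨x, y⟩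
  aesop

lemma isEulerianSub_empty : IsEulerianSub (∅ : Finset (V × V)) := by
  simp [IsEulerianSub, arcInDeg, arcOutDeg]

noncomputable def arcsWithin (A : Finset (V × V)) (T : Finset V) : Finset (V × V) :=
  A.filter fun a => a.1 ∈ T ∧ a.2 ∈ T

lemma mem_arcsWithin {T : Finset V} {a : V × V} :
    a ∈ arcsWithin A T ↔ a ∈ A ∧ a.1 ∈ T ∧ a.2 ∈ T :=
  mem_filter

lemma arcsWithin_subset (A : Finset (V × V)) (T : Finset V) : arcsWithin A T ⊆ A :=
  filter_subset _ _

end Arcs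

section Orientation

variable {V : Type*} {G H : SimpleGraph V} {A : Finset (V × V)} {u v : V}

lemma isOrientation_iff :
    IsOrientation G A ↔
      (∀ u v, G.Adj u v ↔ (u, v) ∈ A ∨ (v, u) ∈ A) ∧
        ∀ u v, (u, v) ∈ A → (v, u) ∉ A := by
  constructor
  · rintro ⟨harc, hone⟩
    refine ⟨fun u v => ⟨fun h => ?_, ?_⟩, fun u v h => (hone u v (harc _ h)).mp h⟩
    · by_cases h' : (v, u) ∈ A
      · exact Or.inr h'
      · exact Or.inl ((hone u v h).mpr h')
    · rintro (h | h)
      exacts [harc _ h, (harc _ h).symm]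
  · rintro ⟨hadj, hasymm⟩
    refine ⟨fun a ha => (hadj a.1 a.2).mpr (Or.inl ha),
      fun u v h => ⟨hasymm u v, fun h' => ?_⟩⟩
    exact ((hadj u v).mp h).resolve_right h'

namespace IsOrientation

lemma adj_iff (hA : IsOrientation G A) : G.Adj u v ↔ (u, v) ∈ A ∨ (v, u) ∈ A :=
  (isOrientation_iff.mp hA).1 u v

lemma asymm (hA : IsOrientation G A) (h : (u, v) ∈ A) : (v, u) ∉ A :=
  (isOrientation_iff.mp hA).2 u v h

lemma restrictTo (hA : IsOrientation G A) (T : Finset V) :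
    IsOrientation (G.restrictTo T) (arcsWithin A T) := by
  refine isOrientation_iff.mpr ⟨fun u v => ?_, fun u v h h' =>
    hA.asymm (mem_arcsWithin.mp h).1 (mem_arcsWithin.mp h').1⟩
  simp only [SimpleGraph.restrictTo_adj, hA.adj_iff, mem_arcsWithin]
  tauto

lemma card_filter_adj [Fintype V] (hA : IsOrientation H A) (v : V) :
    #{w | H.Adj v w} = arcOutDeg A v + arcInDeg A v := by
  rw [arcOutDeg_eq_card, arcInDeg_eq_card, ← card_union_of_disjoint]
  · congr 1
    ext w
    simp [hA.adj_iff]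
  · exact disjoint_filter.mpr fun w _ h => hA.asymm h

lemma union_image_mk {T : Finset V} (hA : IsOrientation (G.restrictTo T) A) (hv : v ∉ T) :
    IsOrientation (G.restrictTo (insert v T))
      (A ∪ (T.filter (G.Adj v)).image (Prod.mk v)) := by
  have hAT : ∀ {x y}, (x, y) ∈ A → x ∈ T ∧ y ∈ T := fun h => (hA.1 _ h).2
  have hAiff : ∀ {x y}, x ∈ T → y ∈ T → (G.Adj x y ↔ (x, y) ∈ A ∨ (y, x) ∈ A) :=
    fun {x y} hx hy => by simpa [hx, hy] using hA.adj_iff (u := x) (v := y)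
  refine isOrientation_iff.mpr ⟨fun x y => ?_, fun x y => ?_⟩
  · simp only [SimpleGraph.restrictTo_adj, mem_insert, mem_union, mem_image, mem_filter,
      Prod.mk.injEq]
    have hvv : ¬G.Adj v v := G.irrefl
    have hsymm : ∀ {x y}, G.Adj x y → G.Adj y x := fun h => h.symm
    grind
  · simp only [mem_union, mem_image, mem_filter, Prod.mk.injEq]
    have hxy := hA.asymm (u := x) (v := y)
    grind

end IsOrientation

end Orientation

section AlonTarsi

variable {V : Type*}

lemma isATOrientation_iff_even_card {A D : Finset (V × V)} (hDA : D ⊆ A)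
    (hD : IsEulerianSub D) (hA : ∀ B ⊆ A, IsEulerianSub B → B = ∅ ∨ B = D) :
    IsATOrientation A ↔ Even #D := by
  have hfilter : ∀ (p : Finset (V × V) → Prop) [DecidablePred p],
      A.powerset.filter (fun B => IsEulerianSub B ∧ p B) = ({∅, D} : Finset _).filter p := by
    intro p _
    ext B
    simp only [mem_filter, mem_powerset, mem_insert, mem_singleton]
    constructor
    · rintro ⟨hBA, hB, hp⟩
      exact ⟨hA B hBA hB, hp⟩
    · rintro ⟨rfl | rfl, hp⟩
      exacts [⟨empty_subset _, isEulerianSub_empty, hp⟩, ⟨hDA, hD, hp⟩]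
  rw [IsATOrientation, hfilter, hfilter]
  rcases D.eq_empty_or_nonempty with rfl | hne
  · simp [filter_singleton]
  · have hD0 : (∅ : Finset (V × V)) ≠ D := hne.ne_empty.symm
    by_cases heven : Even #D <;>
      simp [filter_insert, filter_singleton, heven, hD0, -Nat.not_even_iff_odd]

lemma alonTarsiNumber_eq_two_iff {G : SimpleGraph V} (hedge : ∃ u v, G.Adj u v) :
    alonTarsiNumber G = 2 ↔
      ∃ A, IsOrientation G A ∧ IsATOrientation A ∧ ∀ v, arcOutDeg A v ≤ 1 := by
  set S := {k : ℕ | ∃ A : Finset (V × V),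
    IsOrientation G A ∧ IsATOrientation A ∧ ∀ v, arcOutDeg A v < k}
  have hS : ∀ k ∈ S, 2 ≤ k := by
    rintro k ⟨A, hA, -, hlt⟩
    obtain ⟨u, v, huv⟩ := hedge
    rcases hA.adj_iff.mp huv with h | h
    · exact (one_le_arcOutDeg_of_mem h).trans_lt (hlt u)
    · exact (one_le_arcOutDeg_of_mem h).trans_lt (hlt v)
  have h2 : 2 ∈ S ↔
      ∃ A, IsOrientation G A ∧ IsATOrientation A ∧ ∀ v, arcOutDeg A v ≤ 1 := by
    simp only [S, Set.mem_ofPred_eq, Nat.lt_succ_iff]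
  change sInf S = 2 ↔ _
  rw [← h2]
  constructor
  · intro h
    have hne : S.Nonempty := by
      by_contra hS0
      rw [Set.not_nonempty_iff_eq_empty.mp hS0, Nat.sInf_empty] at h
      omega
    exact h ▸ Nat.sInf_mem hne
  · exact fun h => le_antisymm (Nat.sInf_le h) (hS _ (Nat.sInf_mem ⟨2, h⟩))

end AlonTarsi

section Core

variable {V : Type*} [Fintype V] {G : SimpleGraph V}

lemma subset_twoCoreSet {S : Finset V} (hS : ∀ u ∈ S, 2 ≤ #(S.filter (G.Adj u))) :
    S ⊆ twoCoreSet G :=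
  fun v hv => mem_filter.mpr ⟨mem_univ v, S, hS, hv⟩

lemma two_le_card_filter_adj_twoCoreSet {v : V} (hv : v ∈ twoCoreSet G) :
    2 ≤ #((twoCoreSet G).filter (G.Adj v)) := by
  obtain ⟨-, S, hS, hvS⟩ := mem_filter.mp hv
  exact (hS v hvS).trans (card_le_card (filter_subset_filter _ (subset_twoCoreSet hS)))

lemma three_le_card_twoCoreSet (hC : (twoCoreSet G).Nonempty) : 3 ≤ #(twoCoreSet G) := by
  obtain ⟨v, hv⟩ := hC
  have hsub : (twoCoreSet G).filter (G.Adj v) ⊆ (twoCoreSet G).erase v :=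
    fun w hw => mem_erase.mpr ⟨(G.ne_of_adj (mem_filter.mp hw).2).symm, (mem_filter.mp hw).1⟩
  have := (two_le_card_filter_adj_twoCoreSet hv).trans (card_le_card hsub)
  rw [card_erase_of_mem hv] at this
  omega

/-- Otherwise `s ∪ twoCoreSet G` would have minimum degree `2`, so `s` would lie in the core. -/
lemma exists_card_filter_adj_le_one {s : Finset V} (hs : s.Nonempty)
    (hsC : Disjoint s (twoCoreSet G)) :
    ∃ v ∈ s, #((s ∪ twoCoreSet G).filter (G.Adj v)) ≤ 1 := by
  by_contra! h
  have hsub : s ∪ twoCoreSet G ⊆ twoCoreSet G := by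
    refine subset_twoCoreSet fun u hu => ?_
    rcases mem_union.mp hu with hu | hu
    · exact h u hu
    · exact (two_le_card_filter_adj_twoCoreSet hu).trans
        (card_le_card (filter_subset_filter _ subset_union_right))
  obtain ⟨v, hv⟩ := hs
  exact disjoint_left.mp hsC hv (hsub (mem_union_left _ hv))

/-- The vertices of an Eulerian subdigraph of an orientation span a subgraph of minimum
degree `2`: every vertex has an out-arc and an in-arc, to two distinct neighbours. -/
lemma IsOrientation.subset_arcsWithin_twoCoreSet {A B : Finset (V × V)}
    (hA : IsOrientation G A) (hBA : B ⊆ A) (hB : IsEulerianSub B) :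
    B ⊆ arcsWithin A (twoCoreSet G) := by
  set S := B.image Prod.fst
  have hS : ∀ u, 1 ≤ arcOutDeg B u → u ∈ S := fun u hu => by
    obtain ⟨w, hw⟩ := exists_mem_of_one_le_arcOutDeg hu
    exact mem_image.mpr ⟨_, hw, rfl⟩
  have hSC : S ⊆ twoCoreSet G := by
    refine subset_twoCoreSet fun u hu => ?_
    obtain ⟨a, ha, rfl⟩ := mem_image.mp hu
    have hout : 1 ≤ arcOutDeg B a.1 := one_le_arcOutDeg_of_mem ha
    obtain ⟨x, hx⟩ := exists_mem_of_one_le_arcOutDeg hout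
    obtain ⟨y, hy⟩ := exists_mem_of_one_le_arcInDeg ((hB a.1).symm ▸ hout)
    have hxy : x ≠ y := by
      rintro rfl
      exact hA.asymm (hBA hx) (hBA hy)
    refine one_lt_card.mpr ⟨x, mem_filter.mpr ⟨?_, hA.1 _ (hBA hx)⟩,
      y, mem_filter.mpr ⟨hS y (one_le_arcOutDeg_of_mem hy), (hA.1 _ (hBA hy)).symm⟩, hxy⟩
    exact hS x ((hB x) ▸ one_le_arcInDeg_of_mem hx)
  intro a ha
  refine mem_arcsWithin.mpr ⟨hBA ha, hSC (hS _ (one_le_arcOutDeg_of_mem ha)), hSC (hS _ ?_)⟩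
  exact (hB a.2) ▸ one_le_arcInDeg_of_mem ha

end Core

section Extension

variable {V : Type*} [Fintype V] {G : SimpleGraph V} {D : Finset (V × V)}

lemma exists_isOrientation_restrictTo_union (hD : IsOrientation (G.restrictTo (twoCoreSet G)) D)
    (hDout : ∀ v, arcOutDeg D v ≤ 1) (s : Finset V) (hs : Disjoint s (twoCoreSet G)) :
    ∃ A, D ⊆ A ∧ IsOrientation (G.restrictTo (s ∪ twoCoreSet G)) A ∧
      (∀ v, arcOutDeg A v ≤ 1) ∧ ∀ a ∈ A, a ∉ D → a.1 ∈ s := by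
  induction s using Finset.strongInduction with
  | _ s ih =>
  rcases s.eq_empty_or_nonempty with rfl | hne
  · exact ⟨D, subset_rfl, by simpa using hD, hDout, fun a ha haD => absurd ha haD⟩
  obtain ⟨v, hvs, hv⟩ := exists_card_filter_adj_le_one hne hs
  obtain ⟨A, hDA, hA, hAout, hAnew⟩ :=
    ih (s.erase v) (erase_ssubset hvs) (disjoint_of_subset_left (erase_subset v s) hs)
  set T := s.erase v ∪ twoCoreSet G
  have hvT : v ∉ T := by
    simp only [T, mem_union, mem_erase, ne_eq, not_true_eq_false, false_and, false_or]
    exact disjoint_left.mp hs hvs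
  have hinsert : insert v T = s ∪ twoCoreSet G := by
    rw [← insert_union, insert_erase hvs]
  set N := (T.filter (G.Adj v)).image (Prod.mk v)
  have hNfst : ∀ a ∈ N, a.1 = v := by
    intro a ha
    obtain ⟨w, -, rfl⟩ := mem_image.mp ha
    rfl
  refine ⟨A ∪ N, hDA.trans subset_union_left, hinsert ▸ hA.union_image_mk hvT,
    fun u => ?_, ?_⟩
  · refine (arcOutDeg_union_le A N u).trans ?_
    by_cases hu : u = v
    · subst hu
      have hA0 : arcOutDeg A u = 0 :=
        arcOutDeg_eq_zero fun a ha h => hvT (h ▸ (hA.1 a ha).2.1)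
      have hN : arcOutDeg N u ≤ 1 := calc
        arcOutDeg N u ≤ #N := card_filter_le _ _
        _ ≤ #(T.filter (G.Adj u)) := card_image_le
        _ ≤ #((s ∪ twoCoreSet G).filter (G.Adj u)) :=
          card_le_card (filter_subset_filter _ (hinsert ▸ subset_insert u T))
        _ ≤ 1 := hv
      omega
    · have hN0 : arcOutDeg N u = 0 := arcOutDeg_eq_zero fun a ha h => hu (h ▸ hNfst a ha)
      have := hAout u
      omega
  · intro a ha haD
    rcases mem_union.mp ha with ha | ha
    · exact mem_of_mem_erase (hAnew a ha haD)
    · exact hNfst a ha ▸ hvs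

lemma exists_isOrientation_extending (hD : IsOrientation (G.restrictTo (twoCoreSet G)) D)
    (hDout : ∀ v, arcOutDeg D v ≤ 1) :
    ∃ A, D ⊆ A ∧ IsOrientation G A ∧ (∀ v, arcOutDeg A v ≤ 1) ∧
      ∀ a ∈ A, a ∉ D → a.1 ∉ twoCoreSet G := by
  obtain ⟨A, hDA, hA, hAout, hAnew⟩ :=
    exists_isOrientation_restrictTo_union hD hDout _ sdiff_disjoint
  rw [sdiff_union_of_subset (subset_univ _), G.restrictTo_univ] at hA
  exact ⟨A, hDA, hA, hAout, fun a ha haD => (mem_sdiff.mp (hAnew a ha haD)).2⟩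

end Extension

open Fin.CommRing Fin.NatCast

section CycleArcs

variable {V : Type*} {n : ℕ} [NeZero n] {c : Fin n → V}

noncomputable def cycleArcs (c : Fin n → V) : Finset (V × V) :=
  univ.image fun i => (c i, c (i + 1))

lemma mem_cycleArcs {a : V × V} : a ∈ cycleArcs c ↔ ∃ i, (c i, c (i + 1)) = a := by
  simp [cycleArcs]

lemma mk_mem_cycleArcs (hc : Function.Injective c) {i j : Fin n} :
    (c i, c j) ∈ cycleArcs c ↔ j = i + 1 := by
  simp only [mem_cycleArcs, Prod.mk.injEq, hc.eq_iff]
  exact ⟨fun ⟨k, hki, hkj⟩ => hkj ▸ hki ▸ rfl, fun h => ⟨i, rfl, h.symm⟩⟩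

lemma card_cycleArcs (hc : Function.Injective c) : #(cycleArcs c) = n := by
  rw [cycleArcs, card_image_of_injective _ fun i j h => hc (congrArg Prod.fst h), card_univ,
    Fintype.card_fin]

lemma arcOutDeg_cycleArcs (hc : Function.Injective c) (v : V) :
    arcOutDeg (cycleArcs c) v = #{i | c i = v} := by
  rw [arcOutDeg, cycleArcs, filter_image,
    card_image_of_injective _ fun i j h => hc (congrArg Prod.fst h)]

/-- The in-arcs are the out-arcs shifted by one step along the cycle. -/
lemma arcInDeg_cycleArcs (hc : Function.Injective c) (v : V) :
    arcInDeg (cycleArcs c) v = #{i | c i = v} := by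
  rw [arcInDeg, cycleArcs, filter_image,
    card_image_of_injective _ fun i j h => hc (congrArg Prod.fst h)]
  exact card_nbij' (· + 1) (· - 1) (fun _ h => by simpa using h) (fun _ h => by simpa using h)
    (fun _ _ => by simp) (fun _ _ => by simp)

lemma isEulerianSub_cycleArcs (hc : Function.Injective c) : IsEulerianSub (cycleArcs c) :=
  fun v => by rw [arcInDeg_cycleArcs hc, arcOutDeg_cycleArcs hc]

lemma arcOutDeg_cycleArcs_le_one (hc : Function.Injective c) (v : V) :
    arcOutDeg (cycleArcs c) v ≤ 1 := by
  rw [arcOutDeg_cycleArcs hc]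
  exact card_le_one.mpr fun i hi j hj => hc ((mem_filter.mp hi).2.trans (mem_filter.mp hj).2.symm)

lemma Fin.eq_univ_of_add_one_mem {s : Finset (Fin n)} {i : Fin n} (hi : i ∈ s)
    (hs : ∀ j ∈ s, j + 1 ∈ s) : s = univ := by
  have hk : ∀ k : ℕ, i + (k : Fin n) ∈ s := by
    intro k
    induction k with
    | zero => simpa using hi
    | succ k ih => simpa [add_assoc] using hs _ ih
  refine eq_univ_of_forall fun j => ?_
  simpa using hk (j - i).val

/-- An Eulerian subset of a directed cycle containing one arc contains the next one. -/
lemma eq_empty_or_eq_cycleArcs {B : Finset (V × V)} (hc : Function.Injective c)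
    (hB : B ⊆ cycleArcs c) (hBe : IsEulerianSub B) : B = ∅ ∨ B = cycleArcs c := by
  rcases B.eq_empty_or_nonempty with h | ⟨a, ha⟩
  · exact Or.inl h
  obtain ⟨i, rfl⟩ := mem_cycleArcs.mp (hB ha)
  have hnext : ∀ j, (c j, c (j + 1)) ∈ B → (c (j + 1), c (j + 1 + 1)) ∈ B := by
    intro j hj
    obtain ⟨x, hx⟩ := exists_mem_of_one_le_arcOutDeg ((hBe _) ▸ one_le_arcInDeg_of_mem hj)
    obtain ⟨k, hk⟩ := mem_cycleArcs.mp (hB hx)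
    obtain ⟨hk1, rfl⟩ := Prod.mk.inj hk
    obtain rfl := hc hk1
    exact hx
  have huniv := Fin.eq_univ_of_add_one_mem (s := {j | (c j, c (j + 1)) ∈ B})
    (mem_filter.mpr ⟨mem_univ i, ha⟩)
    fun j hj => mem_filter.mpr ⟨mem_univ _, hnext j (mem_filter.mp hj).2⟩
  refine Or.inr (Subset.antisymm hB fun a ha' => ?_)
  obtain ⟨j, rfl⟩ := mem_cycleArcs.mp ha'
  have hj : j ∈ ({j | (c j, c (j + 1)) ∈ B} : Finset (Fin n)) := by
    rw [huniv]; exact mem_univ j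
  exact (mem_filter.mp hj).2

end CycleArcs

section CycleGraph

variable {V : Type*} {G : SimpleGraph V} {n : ℕ}

lemma cycleGraph_adj_iff_eq_add_one {i j : Fin (n + 2)} :
    (SimpleGraph.cycleGraph (n + 2)).Adj i j ↔ j = i + 1 ∨ i = j + 1 := by
  rw [SimpleGraph.cycleGraph_adj, sub_eq_iff_eq_add, sub_eq_iff_eq_add, add_comm 1 i,
    add_comm 1 j, or_comm]

lemma isOrientation_cycleArcs_iff {C : Finset V} {c : Fin (n + 2) → V} (hn : 1 ≤ n)
    (hc : Function.Injective c) (hC : Set.range c = C) :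
    IsOrientation (G.restrictTo C) (cycleArcs c) ↔
      ∀ i j, G.Adj (c i) (c j) ↔ (SimpleGraph.cycleGraph (n + 2)).Adj i j := by
  have hcC : ∀ i, c i ∈ C := fun i => Finset.mem_coe.mp (hC ▸ Set.mem_range_self i)
  have hadj : ∀ i j, (G.restrictTo C).Adj (c i) (c j) ↔ G.Adj (c i) (c j) := by
    simp [hcC]
  simp only [isOrientation_iff, cycleGraph_adj_iff_eq_add_one, ← mk_mem_cycleArcs hc, ← hadj]
  have hmemC : ∀ {a}, a ∈ cycleArcs c → a.1 ∈ C ∧ a.2 ∈ C := fun ha => by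
    obtain ⟨i, rfl⟩ := mem_cycleArcs.mp ha
    exact ⟨hcC _, hcC _⟩
  refine ⟨fun h i j => h.1 _ _, fun h => ⟨fun u w => ?_, ?_⟩⟩
  · by_cases huw : u ∈ C ∧ w ∈ C
    · obtain ⟨i, rfl⟩ : u ∈ Set.range c := hC ▸ huw.1
      obtain ⟨j, rfl⟩ : w ∈ Set.range c := hC ▸ huw.2
      exact h i j
    · refine ⟨fun h' => absurd h'.2 huw, ?_⟩
      rintro (hm | hm)
      exacts [(huw (hmemC hm)).elim, (huw (hmemC hm).symm).elim]
  · intro u w huw hwu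
    obtain ⟨i, hi⟩ := mem_cycleArcs.mp huw
    obtain ⟨rfl, rfl⟩ := Prod.mk.inj hi
    rw [mk_mem_cycleArcs hc] at hwu
    have h2 : ((1 + 1 : Fin (n + 2)) : ℕ) = 2 := by
      rw [Fin.val_add, Fin.val_one, Nat.mod_eq_of_lt (by omega)]
    have : (1 + 1 : Fin (n + 2)) = 0 := by
      linear_combination -hwu
    simp [this] at h2

lemma nonempty_induce_iso_cycleGraph {C : Finset V} {c : Fin (n + 2) → V}
    (hc : Function.Injective c) (hC : Set.range c = C)
    (hadj : ∀ i j, G.Adj (c i) (c j) ↔ (SimpleGraph.cycleGraph (n + 2)).Adj i j) :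
    Nonempty (G.induce (C : Set V) ≃g SimpleGraph.cycleGraph (n + 2)) := by
  let f : SimpleGraph.cycleGraph (n + 2) ↪g G := ⟨⟨c, hc⟩, hadj _ _⟩
  rw [← hC]
  exact ⟨f.isoInduceRange.symm⟩

end CycleGraph

section Dynamics

open Function

variable {α : Type*} {f : α → α}

lemma SimpleGraph.Connected.exists_iterate_eq_iterate {G : SimpleGraph α} (hconn : G.Connected)
    (hf : ∀ u v, G.Adj u v → f u = v ∨ f v = u) (u v : α) : ∃ i j, f^[i] u = f^[j] v := by
  obtain ⟨p⟩ := hconn.preconnected u v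
  induction p with
  | nil => exact ⟨0, 0, rfl⟩
  | @cons u w v huw _ ih =>
    obtain ⟨i, j, hij⟩ := ih
    rcases hf u w huw with h | h
    · exact ⟨i + 1, j, by rw [iterate_succ_apply, h, hij]⟩
    · exact ⟨i, j + 1, by rw [← h, ← iterate_succ_apply, iterate_succ_apply', hij,
        iterate_succ_apply']⟩

lemma Set.InjOn.mem_periodicPts {s : Set α} (hinj : s.InjOn f) (hs : s.Finite)
    (hmaps : s.MapsTo f s) {x : α} (hx : x ∈ s) : x ∈ periodicPts f := by
  have : Finite s := hs.to_subtype
  obtain ⟨n, hn, hper⟩ :=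
    Function.mem_periodicPts.mp ((hmaps.restrict_inj.mpr hinj).mem_periodicPts ⟨x, hx⟩)
  refine mk_mem_periodicPts hn ?_
  have := congrArg Subtype.val hper
  rwa [hmaps.iterate_restrict, Set.MapsTo.val_restrict_apply] at this

lemma exists_iterate_eq_of_iterate_eq_iterate {x y : α} (hy : y ∈ periodicPts f) {i j : ℕ}
    (h : f^[i] x = f^[j] y) : ∃ k, f^[k] x = y := by
  have hp := minimalPeriod_pos_of_mem_periodicPts hy
  refine ⟨minimalPeriod f y * j - j + i, ?_⟩
  rw [iterate_add_apply, h, ← iterate_add_apply, Nat.sub_add_cancel (Nat.le_mul_of_pos_left j hp)]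
  exact (isPeriodicPt_minimalPeriod f y).mul_const j

/-- Every point of `s` is periodic, and as forward orbits meet, each lies on the orbit of a fixed
`x ∈ s`, enumerated by `c`. -/
lemma exists_fin_cycle {s : Finset α} (hmaps : Set.MapsTo f s s) (hinj : Set.InjOn f s)
    (horb : ∀ u v, ∃ i j, f^[i] u = f^[j] v) (hs : s.Nonempty) :
    ∃ n, ∃ c : Fin (n + 1) → α,
      Injective c ∧ Set.range c = s ∧ ∀ i, c (i + 1) = f (c i) := by
  obtain ⟨x, hx⟩ := hs
  have hper : ∀ y ∈ s, y ∈ periodicPts f := fun y hy =>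
    hinj.mem_periodicPts s.finite_toSet hmaps hy
  obtain ⟨n, hn⟩ : ∃ n, minimalPeriod f x = n + 1 :=
    Nat.exists_eq_add_one.mpr (minimalPeriod_pos_of_mem_periodicPts (hper x hx))
  refine ⟨n, fun i => f^[i] x, fun i j h => Fin.ext ?_, ?_, fun i => ?_⟩
  · have hIio : ∀ k : Fin (n + 1), (k : ℕ) ∈ Set.Iio (minimalPeriod f x) := fun k => by
      simpa [hn] using k.isLt
    exact iterate_injOn_Iio_minimalPeriod (hIio i) (hIio j) h
  · ext y
    refine ⟨?_, fun hy => ?_⟩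
    · rintro ⟨i, rfl⟩
      exact hmaps.iterate i hx
    · obtain ⟨i, j, hij⟩ := horb x y
      obtain ⟨k, rfl⟩ := exists_iterate_eq_of_iterate_eq_iterate (hper y hy) hij
      exact ⟨⟨k % (n + 1), Nat.mod_lt _ n.succ_pos⟩,
        by simp [← hn, iterate_mod_minimalPeriod_eq]⟩
  · simp only [Fin.val_add, Fin.val_one', Nat.add_mod_mod, ← hn, iterate_mod_minimalPeriod_eq,
      iterate_succ_apply']

end Dynamics

section Forward

variable {V : Type*} [Fintype V] {G : SimpleGraph V} {A : Finset (V × V)}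

lemma exists_forall_eq_of_arcOutDeg_le_one (hout : ∀ v, arcOutDeg A v ≤ 1) :
    ∃ f : V → V, ∀ u w, (u, w) ∈ A → f u = w := by
  refine ⟨fun u => if h : ∃ w, (u, w) ∈ A then h.choose else u, fun u w huw => ?_⟩
  have h : ∃ w, (u, w) ∈ A := ⟨w, huw⟩
  dsimp only
  rw [dif_pos h]
  exact eq_of_arcOutDeg_le_one (hout u) h.choose_spec huw

/-- Outdegree at most `1` allows at most as many core arcs as core vertices, while minimum
degree `2` in the core forces at least as many. -/
lemma IsOrientation.arcDeg_arcsWithin_twoCoreSet_eq_one (hA : IsOrientation G A)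
    (hout : ∀ v, arcOutDeg A v ≤ 1) {v : V} (hv : v ∈ twoCoreSet G) :
    arcOutDeg (arcsWithin A (twoCoreSet G)) v = 1 ∧
      arcInDeg (arcsWithin A (twoCoreSet G)) v = 1 := by
  set C := twoCoreSet G
  have hAC := hA.restrictTo C
  have hdeg : ∀ u ∈ C, #(C.filter (G.Adj u)) =
      arcOutDeg (arcsWithin A C) u + arcInDeg (arcsWithin A C) u := fun u hu => by
    rw [← hAC.card_filter_adj]
    congr 1
    ext w
    simp [hu, and_comm]
  refine eq_one_of_sum_eq_of_le_one (f := arcOutDeg (arcsWithin A C))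
    (g := arcInDeg (arcsWithin A C)) (fun u _ => (arcOutDeg_mono (arcsWithin_subset A C) u).trans
      (hout u)) (fun u hu => hdeg u hu ▸ two_le_card_filter_adj_twoCoreSet hu) ?_ hv
  rw [sum_arcOutDeg fun a ha => (mem_arcsWithin.mp ha).2.1,
    sum_arcInDeg fun a ha => (mem_arcsWithin.mp ha).2.2]

/-- The arcs inside the core follow a successor function `f` which permutes the core;
connectivity makes it a single cycle. -/
lemma IsOrientation.exists_cycleArcs_eq_arcsWithin_twoCoreSet (hconn : G.Connected)
    (hA : IsOrientation G A) (hout : ∀ v, arcOutDeg A v ≤ 1) (hC : (twoCoreSet G).Nonempty) :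
    ∃ n, ∃ c : Fin (n + 1) → V, Function.Injective c ∧ Set.range c = twoCoreSet G ∧
      cycleArcs c = arcsWithin A (twoCoreSet G) := by
  set C := twoCoreSet G
  obtain ⟨f, hf⟩ := exists_forall_eq_of_arcOutDeg_le_one hout
  have hdeg := fun v (hv : v ∈ C) => hA.arcDeg_arcsWithin_twoCoreSet_eq_one hout hv
  have hfC : ∀ v ∈ C, (v, f v) ∈ arcsWithin A C := fun v hv => by
    obtain ⟨w, hw⟩ := exists_mem_of_one_le_arcOutDeg (hdeg v hv).1.ge
    rwa [hf v w (arcsWithin_subset A C hw)]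
  have hmaps : Set.MapsTo f C C := fun v hv => (mem_arcsWithin.mp (hfC v hv)).2.2
  have hinj : Set.InjOn f C := fun u hu w hw h =>
    eq_of_arcInDeg_le_one (hdeg _ (hmaps hw)).2.le (h ▸ hfC u hu) (hfC w hw)
  have horb := hconn.exists_iterate_eq_iterate fun u w huw =>
    (hA.adj_iff.mp huw).imp (hf u w) (hf w u)
  obtain ⟨n, c, hc, hrange, hsucc⟩ := exists_fin_cycle hmaps hinj horb hC
  have hcC : ∀ i, c i ∈ C := fun i => Finset.mem_coe.mp (hrange ▸ Set.mem_range_self i)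
  refine ⟨n, c, hc, hrange, Finset.ext fun ⟨u, w⟩ => ⟨fun h => ?_, fun h => ?_⟩⟩
  · obtain ⟨i, hi⟩ := mem_cycleArcs.mp h
    rw [← hi, hsucc]
    exact hfC _ (hcC i)
  · obtain ⟨huA, hu, -⟩ := mem_arcsWithin.mp h
    obtain ⟨i, rfl⟩ : u ∈ Set.range c := hrange ▸ hu
    rw [← hf _ _ huA, ← hsucc]
    exact mem_cycleArcs.mpr ⟨i, rfl⟩

lemma IsOrientation.exists_induce_twoCoreSet_iso_cycleGraph (hconn : G.Connected)
    (hA : IsOrientation G A) (hAT : IsATOrientation A) (hout : ∀ v, arcOutDeg A v ≤ 1)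
    (hC : (twoCoreSet G).Nonempty) :
    ∃ m : ℕ, 1 ≤ m ∧
      Nonempty (G.induce ↑(twoCoreSet G) ≃g SimpleGraph.cycleGraph (2 * m + 2)) := by
  obtain ⟨n, c, hc, hrange, hAC⟩ := hA.exists_cycleArcs_eq_arcsWithin_twoCoreSet hconn hout hC
  have hcard : #(twoCoreSet G) = n + 1 := by
    have : twoCoreSet G = univ.image c :=
      coe_injective (by rw [coe_image, coe_univ, Set.image_univ, hrange])
    rw [this, card_image_of_injective _ hc, card_univ, Fintype.card_fin]
  have heven : Even (n + 1) := by
    rw [← card_cycleArcs hc]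
    refine (isATOrientation_iff_even_card (hAC ▸ arcsWithin_subset A _)
      (isEulerianSub_cycleArcs hc) fun B hBA hB => ?_).mp hAT
    exact eq_empty_or_eq_cycleArcs hc (hAC ▸ hA.subset_arcsWithin_twoCoreSet hBA hB) hB
  have h3 := three_le_card_twoCoreSet hC
  obtain ⟨m, rfl⟩ : ∃ m, n = 2 * m + 1 := by
    obtain ⟨r, hr⟩ := heven
    exact ⟨r - 1, by omega⟩
  refine ⟨m, by omega, nonempty_induce_iso_cycleGraph (n := 2 * m) hc hrange ?_⟩
  exact (isOrientation_cycleArcs_iff (by omega) hc hrange).mp (hAC ▸ hA.restrictTo _)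

end Forward

section Backward

variable {V : Type*} [Fintype V] {G : SimpleGraph V}

lemma alonTarsiNumber_eq_two_of_isOrientation_restrictTo_twoCoreSet
    (hedge : ∃ u v, G.Adj u v) {D : Finset (V × V)}
    (hD : IsOrientation (G.restrictTo (twoCoreSet G)) D) (hDout : ∀ v, arcOutDeg D v ≤ 1)
    (hDeul : IsEulerianSub D) (hDsub : ∀ B ⊆ D, IsEulerianSub B → B = ∅ ∨ B = D)
    (heven : Even #D) : alonTarsiNumber G = 2 := by
  obtain ⟨A, hDA, hA, hAout, hAnew⟩ := exists_isOrientation_extending hD hDout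
  refine (alonTarsiNumber_eq_two_iff hedge).mpr ⟨A, hA, ?_, hAout⟩
  refine (isATOrientation_iff_even_card hDA hDeul fun B hBA hB => hDsub B ?_ hB).mpr heven
  intro a ha
  by_contra haD
  exact hAnew a (hBA ha) haD (mem_arcsWithin.mp (hA.subset_arcsWithin_twoCoreSet hBA hB ha)).2.1

lemma alonTarsiNumber_eq_two_of_twoCoreSet_eq_empty (hedge : ∃ u v, G.Adj u v)
    (hC : twoCoreSet G = ∅) : alonTarsiNumber G = 2 := by
  refine alonTarsiNumber_eq_two_of_isOrientation_restrictTo_twoCoreSet hedge (D := ∅) ?_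
    (fun v => by simp [arcOutDeg]) isEulerianSub_empty (fun B hB _ => Or.inl (subset_empty.mp hB))
    (by simp)
  simp [isOrientation_iff, hC]

lemma alonTarsiNumber_eq_two_of_iso_cycleGraph (hedge : ∃ u v, G.Adj u v) {n : ℕ} (hn : 1 ≤ n)
    (e : G.induce ↑(twoCoreSet G) ≃g SimpleGraph.cycleGraph (2 * n + 2)) :
    alonTarsiNumber G = 2 := by
  set c : Fin (2 * n + 2) → V := fun i => e.symm i
  have hc : Function.Injective c := Subtype.val_injective.comp e.symm.injective
  have hrange : Set.range c = twoCoreSet G := by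
    ext v
    exact ⟨fun ⟨i, hi⟩ => hi ▸ (e.symm i).2, fun hv => ⟨e ⟨v, hv⟩, by simp [c]⟩⟩
  have hD := (isOrientation_cycleArcs_iff (by omega) hc hrange).mpr fun i j => e.symm.map_adj_iff
  refine alonTarsiNumber_eq_two_of_isOrientation_restrictTo_twoCoreSet hedge hD
    (arcOutDeg_cycleArcs_le_one hc) (isEulerianSub_cycleArcs hc)
    (fun B hB hBe => eq_empty_or_eq_cycleArcs hc hB hBe) ?_
  rw [card_cycleArcs hc]
  exact ⟨n + 1, by ring⟩

end Backward

theorem stmt0_general {V : Type*} [Fintype V] (G : SimpleGraph V)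
    (hconn : G.Connected) (hedge : ∃ u v : V, G.Adj u v) :
    alonTarsiNumber G = 2 ↔
      (twoCoreSet G = ∅ ∨
        ∃ m : ℕ, 1 ≤ m ∧
          Nonempty (G.induce ↑(twoCoreSet G) ≃g SimpleGraph.cycleGraph (2 * m + 2))) := by
  constructor
  · intro h
    rcases (twoCoreSet G).eq_empty_or_nonempty with hC | hC
    · exact Or.inl hC
    obtain ⟨A, hA, hAT, hout⟩ := (alonTarsiNumber_eq_two_iff hedge).mp h
    exact Or.inr (hA.exists_induce_twoCoreSet_iso_cycleGraph hconn hAT hout hC)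
  · rintro (hC | ⟨m, hm, ⟨e⟩⟩)
    · exact alonTarsiNumber_eq_two_of_twoCoreSet_eq_empty hedge hC
    · exact alonTarsiNumber_eq_two_of_iso_cycleGraph hedge hm e

/-- for a connected simple graph `G` with at least one edge,
`AT(G) = 2` iff the core of `G` is `K₁` or an even cycle `C_{2m+2}`, `m ≥ 1`. -/
theorem stmt0 {V : Type*} [Fintype V] [DecidableEq V] (G : SimpleGraph V)
    (hconn : G.Connected) (hedge : ∃ u v : V, G.Adj u v) :
    alonTarsiNumber G = 2 ↔
      (twoCoreSet G = ∅ ∨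
        ∃ m : ℕ, 1 ≤ m ∧
          Nonempty (G.induce ↑(twoCoreSet G) ≃g SimpleGraph.cycleGraph (2 * m + 2))) :=
  stmt0_general G hconn hedge
end

section
/- Let l be a positive integer, let G be an arbitrary finite simple graph, and let H be an l-degenerate graph. If l = 1 or l = 2, then the S-sum G +_S H is 2-degenerate; if l ≥ 3, then G +_S H is l-degenerate. -/
/-!
A copy `(e, w)` of a subdivision vertex has only two neighbours, the copies `(u, w)` and
`(v, w)` of the ends of `e`. A vertex set containing no such copy consists of copies of
original vertices, and two of those are adjacent only when they lie in the same copy of `H`;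
so `l`-degeneracy of `H`, applied inside one such copy, supplies a vertex of degree at most `l`.
-/

open scoped Classical

namespace SimpleGraph

section FSum

variable {V E W : Type*} {K : SimpleGraph (V ⊕ E)} {H : SimpleGraph W}

theorem fSum_adj_inr_iff {e : E} {w : W} {q : (V ⊕ E) × W} :
    (fSum K H).Adj (Sum.inr e, w) q ↔ q.2 = w ∧ K.Adj (Sum.inr e) q.1 := by
  obtain ⟨x, w'⟩ := q
  simp only [fSum, fromRel_adj]
  constructor
  · rintro ⟨-, (⟨-, ⟨u, hu⟩, -⟩ | ⟨hw, hK⟩) | (⟨hx, ⟨u, hu⟩, -⟩ | ⟨hw, hK⟩)⟩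
    · cases hu
    · exact ⟨hw.symm, hK⟩
    · cases hx.symm.trans hu
    · exact ⟨hw, hK.symm⟩
  · rintro ⟨hw, hK⟩
    exact ⟨fun h => hK.ne (congrArg Prod.fst h), Or.inl (Or.inr ⟨hw.symm, hK⟩)⟩

theorem fSum_adj_inl_inl_iff (hK : ∀ u v, ¬K.Adj (Sum.inl u) (Sum.inl v)) {u v : V}
    {w w' : W} :
    (fSum K H).Adj (Sum.inl u, w) (Sum.inl v, w') ↔ u = v ∧ H.Adj w w' := by
  simp only [fSum, fromRel_adj]
  constructor
  · rintro ⟨-, (⟨huv, -, hH⟩ | ⟨-, hK'⟩) | (⟨huv, -, hH⟩ | ⟨-, hK'⟩)⟩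
    · exact ⟨Sum.inl_injective huv, hH⟩
    · exact (hK _ _ hK').elim
    · exact ⟨Sum.inl_injective huv.symm, hH.symm⟩
    · exact (hK _ _ hK').elim
  · rintro ⟨rfl, hH⟩
    exact ⟨fun h => hH.ne (congrArg Prod.snd h), Or.inl (Or.inl ⟨rfl, ⟨u, rfl⟩, hH⟩)⟩

theorem card_filter_fSum_adj_inr_le (s : Finset ((V ⊕ E) × W)) (e : E) (w : W) :
    (s.filter fun q => (fSum K H).Adj (Sum.inr e, w) q).card ≤
      ((s.image Prod.fst).filter fun x => K.Adj (Sum.inr e) x).card := by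
  refine (Finset.card_le_card fun q hq => ?_).trans (Finset.card_image_le (f := (·, w)))
  obtain ⟨hqs, hadj⟩ := Finset.mem_filter.mp hq
  obtain ⟨hw, hK⟩ := fSum_adj_inr_iff.mp hadj
  exact Finset.mem_image.mpr
    ⟨q.1, Finset.mem_filter.mpr ⟨Finset.mem_image_of_mem _ hqs, hK⟩, Prod.ext rfl hw.symm⟩

theorem exists_card_filter_fSum_adj_le_of_forall_inl {l : ℕ}
    (hK : ∀ u v, ¬K.Adj (Sum.inl u) (Sum.inl v)) (hH : Degenerate l H)
    (s : Finset ((V ⊕ E) × W)) (hs : s.Nonempty) (hinl : ∀ p ∈ s, ∃ u, p.1 = Sum.inl u) :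
    ∃ p ∈ s, (s.filter fun q => (fSum K H).Adj p q).card ≤ l := by
  obtain ⟨p₀, hp₀⟩ := hs
  obtain ⟨u, hu⟩ := hinl p₀ hp₀
  set fiber := (s.filter fun p => p.1 = Sum.inl u).image Prod.snd
  obtain ⟨w, hw, hdeg⟩ :=
    hH fiber ⟨p₀.2, Finset.mem_image_of_mem _ (Finset.mem_filter.mpr ⟨hp₀, hu⟩)⟩
  have huw : (Sum.inl u, w) ∈ s := by
    obtain ⟨p, hp, rfl⟩ := Finset.mem_image.mp hw
    obtain ⟨hps, hpu⟩ := Finset.mem_filter.mp hp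
    rwa [← hpu]
  have hsub : (s.filter fun q => (fSum K H).Adj (Sum.inl u, w) q) ⊆
      (fiber.filter fun w' => H.Adj w w').image (Sum.inl u, ·) := by
    intro q hq
    obtain ⟨hqs, hadj⟩ := Finset.mem_filter.mp hq
    obtain ⟨v, hv⟩ := hinl q hqs
    obtain ⟨x, w'⟩ := q
    subst hv
    obtain ⟨rfl, hH'⟩ := (fSum_adj_inl_inl_iff hK).mp hadj
    have hqu : (Sum.inl u, w') ∈ s.filter fun p => p.1 = Sum.inl u :=
      Finset.mem_filter.mpr ⟨hqs, rfl⟩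
    have hfiber : w' ∈ fiber := Finset.mem_image_of_mem Prod.snd hqu
    exact Finset.mem_image_of_mem _ (Finset.mem_filter.mpr ⟨hfiber, hH'⟩)
  exact ⟨_, huw, (Finset.card_le_card hsub).trans (Finset.card_image_le.trans hdeg)⟩

theorem degenerate_fSum {k l : ℕ} (hK : ∀ u v, ¬K.Adj (Sum.inl u) (Sum.inl v))
    (hKdeg : ∀ (e : E) (t : Finset (V ⊕ E)), (t.filter fun x => K.Adj (Sum.inr e) x).card ≤ k)
    (hH : Degenerate l H) : Degenerate (max k l) (fSum K H) := by
  intro s hs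
  by_cases hinr : ∃ p ∈ s, ∃ e, p.1 = Sum.inr e
  · obtain ⟨⟨_, w⟩, hp, e, rfl⟩ := hinr
    exact ⟨_, hp, (card_filter_fSum_adj_inr_le s e w).trans ((hKdeg e _).trans (le_max_left k l))⟩
  · have hinl : ∀ p ∈ s, ∃ u, p.1 = Sum.inl u := fun p hp => by
      rcases h : p.1 with u | e
      · exact ⟨u, rfl⟩
      · exact (hinr ⟨p, hp, e, h⟩).elim
    obtain ⟨p, hp, hdeg⟩ := exists_card_filter_fSum_adj_le_of_forall_inl hK hH s hs hinl
    exact ⟨p, hp, hdeg.trans (le_max_right k l)⟩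

end FSum

section Subdivision

variable {V W : Type*} {G : SimpleGraph V}

theorem subdivisionGraph_not_adj_inl_inl (u v : V) :
    ¬(subdivisionGraph G).Adj (Sum.inl u) (Sum.inl v) := by
  simp [subdivisionGraph]

theorem subdivisionGraph_adj_inr_iff {e : G.edgeSet} {x : V ⊕ G.edgeSet} :
    (subdivisionGraph G).Adj (Sum.inr e) x ↔ ∃ u ∈ (e : Sym2 V), x = Sum.inl u := by
  rcases x with u | f <;> simp [subdivisionGraph]

theorem card_filter_subdivisionGraph_adj_inr_le_two (e : G.edgeSet)
    (t : Finset (V ⊕ G.edgeSet)) :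
    (t.filter fun x => (subdivisionGraph G).Adj (Sum.inr e) x).card ≤ 2 := by
  obtain ⟨⟨x, y⟩, hxy⟩ := Quot.exists_rep (e : Sym2 V)
  refine (Finset.card_le_card (t := {Sum.inl x, Sum.inl y}) fun z hz => ?_).trans
    Finset.card_le_two
  obtain ⟨u, hu, rfl⟩ := subdivisionGraph_adj_inr_iff.mp (Finset.mem_filter.mp hz).2
  rw [← hxy] at hu
  rcases Sym2.mem_iff.mp hu with rfl | rfl <;> simp

theorem degenerate_sSum {l : ℕ} (G : SimpleGraph V) (H : SimpleGraph W) (hH : Degenerate l H) :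
    Degenerate (max 2 l) (sSum G H) :=
  degenerate_fSum subdivisionGraph_not_adj_inl_inl card_filter_subdivisionGraph_adj_inr_le_two hH

end Subdivision

end SimpleGraph

theorem stmt2_general {V W : Type*}
    (l : ℕ) (G : SimpleGraph V) (H : SimpleGraph W)
    (hH : Degenerate l H) :
    ((l = 1 ∨ l = 2) → Degenerate 2 (sSum G H)) ∧
      (3 ≤ l → Degenerate l (sSum G H)) := by
  have hdeg := SimpleGraph.degenerate_sSum G H hH
  refine ⟨fun hl => ?_, fun hl => ?_⟩
  · rwa [max_eq_left (by omega)] at hdeg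
  · rwa [max_eq_right (by omega)] at hdeg

/-- if `H` is `l`-degenerate (`l ≥ 1`) then `G +_S H` is 2-degenerate
when `l = 1` or `l = 2`, and `l`-degenerate when `l ≥ 3`. -/
theorem stmt2 {V W : Type*} [Fintype V] [Fintype W]
    (l : ℕ) (hl : 1 ≤ l) (G : SimpleGraph V) (H : SimpleGraph W)
    (hH : Degenerate l H) :
    ((l = 1 ∨ l = 2) → Degenerate 2 (sSum G H)) ∧
      (3 ≤ l → Degenerate l (sSum G H)) :=
  stmt2_general l G H hH
end

section
/- Let l be a positive integer, let G be an arbitrary finite simple graph, and let H be an l-degenerate graph. Then AT(G +_S H) ≤ 3 if l = 1 or l = 2, and AT(G +_S H) ≤ l + 1 if l ≥ 3. -/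
open scoped Classical

/-!
Rank `H` by a degeneracy ordering `r`, so that every vertex has at most `l` neighbours of
larger rank, and give the vertex `(x, w)` of `G +_S H` the potential `2 r(w) + 1` if `x` is an
original vertex and `2 r(w)` if `x` subdivides an edge. Adjacent vertices get different
potentials; orienting every edge towards the larger one gives an acyclic orientation, whose only
Eulerian subdigraph is empty, so it is Alon–Tarsi. An original vertex points only to its at most
`l` higher-ranked copies, a subdivision vertex only to the two ends of its edge, so all
outdegrees are at most `max 2 l`.
-/

open Finset

section Potential

variable {V : Type*} [Fintype V] (G : SimpleGraph V) (φ : V → ℕ)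

noncomputable def ascendingArcs : Finset (V × V) :=
  univ.filter fun p => G.Adj p.1 p.2 ∧ φ p.1 < φ p.2

variable {G φ}

theorem mem_ascendingArcs {p : V × V} :
    p ∈ ascendingArcs G φ ↔ G.Adj p.1 p.2 ∧ φ p.1 < φ p.2 := by
  simp [ascendingArcs]

theorem isOrientation_ascendingArcs (hφ : ∀ u v, G.Adj u v → φ u ≠ φ v) :
    IsOrientation G (ascendingArcs G φ) := by
  refine ⟨fun p hp => (mem_ascendingArcs.1 hp).1, fun u v huv => ?_⟩
  simp only [mem_ascendingArcs, huv, huv.symm, true_and, not_lt]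
  exact ⟨le_of_lt, fun h => lt_of_le_of_ne h (hφ u v huv)⟩

theorem arcOutDeg_ascendingArcs (v : V) :
    arcOutDeg (ascendingArcs G φ) v = #(univ.filter fun u => G.Adj v u ∧ φ v < φ u) := by
  have : (ascendingArcs G φ).filter (·.1 = v) =
      (univ.filter fun u => G.Adj v u ∧ φ v < φ u).map
        ⟨(v, ·), Prod.mk_right_injective v⟩ := by
    ext ⟨a, b⟩
    simp only [mem_filter, mem_ascendingArcs, mem_map, mem_univ, true_and,
      Function.Embedding.coeFn_mk, Prod.mk.injEq]
    constructor
    · rintro ⟨h, rfl⟩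
      exact ⟨b, h, rfl, rfl⟩
    · rintro ⟨b, h, rfl, rfl⟩
      exact ⟨h, rfl⟩
  rw [arcOutDeg, this, card_map]

end Potential

section Eulerian

variable {V : Type*}

/-- At a vertex of maximal potential an Eulerian arc set would need an arc leaving
upwards. -/
theorem IsEulerianSub.eq_empty_of_lt {B : Finset (V × V)} (hB : IsEulerianSub B)
    {φ : V → ℕ} (hφ : ∀ p ∈ B, φ p.1 < φ p.2) : B = ∅ := by
  by_contra hne
  obtain ⟨p, hp, hmax⟩ := exists_max_image B (fun q => φ q.2) (nonempty_iff_ne_empty.2 hne)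
  have hin : 0 < arcInDeg B p.2 := card_pos.2 ⟨p, mem_filter.2 ⟨hp, rfl⟩⟩
  rw [hB, arcOutDeg] at hin
  obtain ⟨q, hq⟩ := card_pos.1 hin
  obtain ⟨hqB, hq1⟩ := mem_filter.1 hq
  have hle : φ q.2 ≤ φ p.2 := hmax q hqB
  have hlt : φ p.2 < φ q.2 := hq1 ▸ hφ q hqB
  omega

theorem isATOrientation_of_lt {A : Finset (V × V)} {φ : V → ℕ}
    (hφ : ∀ p ∈ A, φ p.1 < φ p.2) : IsATOrientation A := by
  have hEul : ∀ B ∈ A.powerset, IsEulerianSub B → B = ∅ := fun B hB hEB =>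
    hEB.eq_empty_of_lt fun p hp => hφ p (mem_powerset.1 hB hp)
  have hempty : IsEulerianSub (∅ : Finset (V × V)) := fun v => by simp [arcInDeg, arcOutDeg]
  have heven : (A.powerset.filter fun B => IsEulerianSub B ∧ Even B.card) = {∅} := by
    ext B
    simp only [mem_filter, mem_singleton]
    constructor
    · exact fun ⟨hB, hEB, _⟩ => hEul B hB hEB
    · rintro rfl
      exact ⟨empty_mem_powerset A, hempty, by simp⟩
  have hodd : (A.powerset.filter fun B => IsEulerianSub B ∧ ¬ Even B.card) = ∅ :=
    filter_false_of_mem fun B hB ⟨hEB, hodd⟩ => hodd (by simp [hEul B hB hEB])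
  rw [IsATOrientation, heven, hodd]
  simp

end Eulerian

theorem alonTarsiNumber_le_of_potential {V : Type*} [Fintype V] {G : SimpleGraph V}
    (φ : V → ℕ) (hφ : ∀ u v, G.Adj u v → φ u ≠ φ v) {k : ℕ}
    (hk : ∀ v, #(univ.filter fun u => G.Adj v u ∧ φ v < φ u) ≤ k) :
    alonTarsiNumber G ≤ k + 1 := by
  refine Nat.sInf_le ⟨ascendingArcs G φ, isOrientation_ascendingArcs hφ,
    isATOrientation_of_lt fun p hp => (mem_ascendingArcs.1 hp).2, fun v => ?_⟩
  rw [arcOutDeg_ascendingArcs]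
  exact Nat.lt_succ_of_le (hk v)

namespace Degenerate

variable {W : Type*} {l : ℕ} {H : SimpleGraph W}

/-- Peel off a vertex of small degree, give it the least rank and rank the rest recursively. -/
theorem exists_rank_on (hH : Degenerate l H) (s : Finset W) :
    ∃ r : W → ℕ, Set.InjOn r s ∧
      ∀ v ∈ s, #(s.filter fun u => H.Adj v u ∧ r v < r u) ≤ l := by
  induction s using Finset.strongInduction with
  | H s ih =>
  rcases s.eq_empty_or_nonempty with rfl | hs
  · exact ⟨fun _ => 0, by simp, by simp⟩
  obtain ⟨v, hv, hdeg⟩ := hH s hs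
  obtain ⟨r, hinj, hr⟩ := ih (s.erase v) (erase_ssubset hv)
  refine ⟨fun u => if u = v then 0 else r u + 1, ?_, fun w hw => ?_⟩
  · intro a ha b hb hab
    by_cases hav : a = v <;> by_cases hbv : b = v <;> simp only [hav, hbv, if_true, if_false] at hab
    · exact hav.trans hbv.symm
    · omega
    · omega
    · exact hinj (mem_erase.2 ⟨hav, ha⟩) (mem_erase.2 ⟨hbv, hb⟩) (by omega)
  by_cases hwv : w = v
  · subst hwv
    exact (card_le_card (monotone_filter_right s fun _ _ h => h.1)).trans hdeg
  refine (card_le_card fun u hu => ?_).trans (hr w (mem_erase.2 ⟨hwv, hw⟩))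
  obtain ⟨hus, hadj, hlt⟩ := mem_filter.1 hu
  have huv : u ≠ v := by rintro rfl; simp at hlt
  simp only [hwv, huv, if_false] at hlt
  exact mem_filter.2 ⟨mem_erase.2 ⟨huv, hus⟩, hadj, by omega⟩

theorem exists_rank [Fintype W] (hH : Degenerate l H) :
    ∃ r : W → ℕ, Function.Injective r ∧
      ∀ v, #(univ.filter fun u => H.Adj v u ∧ r v < r u) ≤ l := by
  obtain ⟨r, hinj, hr⟩ := hH.exists_rank_on univ
  exact ⟨r, by simpa using hinj, fun v => hr v (mem_univ v)⟩

end Degenerate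

section SSum

variable {V W : Type*} {G : SimpleGraph V} {H : SimpleGraph W}

@[simp] theorem subdivisionGraph_adj_inr_inl {u : V} {e : G.edgeSet} :
    (subdivisionGraph G).Adj (.inr e) (.inl u) ↔ u ∈ (e : Sym2 V) := by
  simp [subdivisionGraph]

@[simp] theorem not_subdivisionGraph_adj_inl_inl {u v : V} :
    ¬ (subdivisionGraph G).Adj (.inl u) (.inl v) := by
  simp [subdivisionGraph]

@[simp] theorem not_subdivisionGraph_adj_inr_inr {e f : G.edgeSet} :
    ¬ (subdivisionGraph G).Adj (.inr e) (.inr f) := by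
  simp [subdivisionGraph]

theorem fSum_adj {E : Type*} {K : SimpleGraph (V ⊕ E)} {a b : (V ⊕ E) × W} :
    (fSum K H).Adj a b ↔
      (a.1 = b.1 ∧ (∃ u : V, a.1 = .inl u) ∧ H.Adj a.2 b.2) ∨ (a.2 = b.2 ∧ K.Adj a.1 b.1) := by
  rw [fSum, SimpleGraph.fromRel_adj]
  constructor
  · rintro ⟨-, h | ⟨h1, ⟨u, hu⟩, hH⟩ | ⟨h2, hK⟩⟩
    · exact h
    · exact .inl ⟨h1.symm, ⟨u, h1 ▸ hu⟩, hH.symm⟩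
    · exact .inr ⟨h2.symm, hK.symm⟩
  · intro h
    refine ⟨?_, .inl h⟩
    rintro rfl
    rcases h with ⟨-, -, hH⟩ | ⟨-, hK⟩
    exacts [hH.ne rfl, hK.ne rfl]

/-- Each copy of `S(G)` is bipartite between original and subdivision vertices, which the
parity of the potential tells apart; between copies the rank `r` decides. -/
def sSumPotential {E : Type*} (r : W → ℕ) (x : (V ⊕ E) × W) : ℕ :=
  2 * r x.2 + Sum.elim (fun _ => 1) (fun _ => 0) x.1

theorem sSumPotential_ne_of_adj {r : W → ℕ} (hr : Function.Injective r)
    {x y : (V ⊕ G.edgeSet) × W} (hxy : (sSum G H).Adj x y) :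
    sSumPotential r x ≠ sSumPotential r y := by
  obtain ⟨a, w⟩ := x
  obtain ⟨b, w'⟩ := y
  rw [sSum, fSum_adj] at hxy
  rcases hxy with ⟨rfl, ⟨u, rfl⟩, hadj⟩ | ⟨rfl, hK⟩
  · have hne : r w ≠ r w' := hr.ne hadj.ne
    simp only [sSumPotential, Sum.elim_inl]
    omega
  · rcases a with u | e <;> rcases b with v | f <;> simp_all [sSumPotential]

theorem card_upper_sSum_inl_le [Fintype V] [Fintype W] (r : W → ℕ) (u : V) (w : W) :
    #(univ.filter fun y => (sSum G H).Adj (.inl u, w) y ∧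
        sSumPotential r ((.inl u, w) : (V ⊕ G.edgeSet) × W) < sSumPotential r y) ≤
      #(univ.filter fun w' => H.Adj w w' ∧ r w < r w') := by
  refine (card_le_card fun y hy => ?_).trans (card_image_le (f := fun w' => (.inl u, w')))
  obtain ⟨b, w'⟩ := y
  obtain ⟨hxy, hlt⟩ := (mem_filter.1 hy).2
  rw [sSum, fSum_adj] at hxy
  rcases hxy with ⟨rfl, -, hadj⟩ | ⟨rfl, hK⟩
  · simp only [sSumPotential, Sum.elim_inl, add_lt_add_iff_right] at hlt
    exact mem_image.2 ⟨w', mem_filter.2 ⟨mem_univ _, hadj, by omega⟩, rfl⟩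
  · rcases b with v | e
    · simp at hK
    · simp [sSumPotential] at hlt

theorem card_neighbors_sSum_inr_le [Fintype V] [Fintype W] (e : G.edgeSet) (w : W) :
    #(univ.filter fun y => (sSum G H).Adj (.inr e, w) y) ≤ 2 := by
  have hsub : (univ.filter fun y => (sSum G H).Adj (.inr e, w) y) ⊆
      (e : Sym2 V).toFinset.image fun u => (.inl u, w) := by
    rintro ⟨b, w'⟩ hy
    have hxy := (mem_filter.1 hy).2
    rw [sSum, fSum_adj] at hxy
    rcases hxy with ⟨-, ⟨u, hu⟩, -⟩ | ⟨rfl, hK⟩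
    · simp at hu
    · rcases b with v | f
      · exact mem_image.2 ⟨v, Sym2.mem_toFinset.2 (by simpa using hK), rfl⟩
      · simp at hK
  calc _ ≤ #((e : Sym2 V).toFinset.image fun u => ((.inl u, w) : (V ⊕ G.edgeSet) × W)) :=
        card_le_card hsub
    _ ≤ #(e : Sym2 V).toFinset := card_image_le
    _ ≤ 2 := by rw [Sym2.card_toFinset]; split_ifs <;> omega

theorem alonTarsiNumber_sSum_le [Fintype V] [Fintype W] {l : ℕ} (hH : Degenerate l H) :
    alonTarsiNumber (sSum G H) ≤ max 2 l + 1 := by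
  obtain ⟨r, hr, hrl⟩ := hH.exists_rank
  refine alonTarsiNumber_le_of_potential (sSumPotential r)
    (fun _ _ => sSumPotential_ne_of_adj hr) fun ⟨a, w⟩ => ?_
  rcases a with u | e
  · exact (card_upper_sSum_inl_le r u w).trans ((hrl w).trans (le_max_right 2 l))
  · exact (card_le_card (monotone_filter_right _ fun _ _ h => h.1)).trans
      ((card_neighbors_sSum_inr_le e w).trans (le_max_left 2 l))

end SSum

theorem stmt3_general {V W : Type*} [Fintype V] [Fintype W]
    (l : ℕ) (G : SimpleGraph V) (H : SimpleGraph W)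
    (hH : Degenerate l H) :
    ((l = 1 ∨ l = 2) → alonTarsiNumber (sSum G H) ≤ 3) ∧
      (3 ≤ l → alonTarsiNumber (sSum G H) ≤ l + 1) := by
  have h := alonTarsiNumber_sSum_le (G := G) hH
  exact ⟨fun hl => by omega, fun hl => by omega⟩

/-- if `H` is `l`-degenerate (`l ≥ 1`) then `AT(G +_S H) ≤ 3` when
`l = 1` or `l = 2`, and `AT(G +_S H) ≤ l + 1` when `l ≥ 3`. -/
theorem stmt3 {V W : Type*} [Fintype V] [Fintype W]
    (l : ℕ) (hl : 1 ≤ l) (G : SimpleGraph V) (H : SimpleGraph W)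
    (hH : Degenerate l H) :
    ((l = 1 ∨ l = 2) → alonTarsiNumber (sSum G H) ≤ 3) ∧
      (3 ≤ l → alonTarsiNumber (sSum G H) ≤ l + 1) :=
  stmt3_general l G H hH
end

section
/- Let k and l be positive integers, let G be a k-degenerate graph and H an l-degenerate graph. Then the R-sum G +_R H is (k+l)-degenerate. -/
open scoped Classical

lemma rGraph_adj_inl_inl {V : Type*} (G : SimpleGraph V) (u v : V) :
    (rGraph G).Adj (Sum.inl u) (Sum.inl v) ↔ G.Adj u v := by
  simp [rGraph, SimpleGraph.fromRel_adj]
  constructor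
  · rintro ⟨h, h1 | h1⟩ <;> [exact h1; exact h1.symm]
  · intro h; exact ⟨fun he => G.ne_of_adj h he, Or.inl h⟩

lemma rGraph_adj_inr {V : Type*} (G : SimpleGraph V) (e : G.edgeSet) (x : V ⊕ ↥G.edgeSet) :
    (rGraph G).Adj (Sum.inr e) x ↔ ∃ u : V, x = Sum.inl u ∧ u ∈ (e : Sym2 V) := by
  cases x with
  | inl u => simp [rGraph, SimpleGraph.fromRel_adj]
  | inr f => simp [rGraph, SimpleGraph.fromRel_adj]

lemma rSum_adj {V W : Type*} (G : SimpleGraph V) (H : SimpleGraph W)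
    (a b : (V ⊕ ↥G.edgeSet) × W) :
    (rSum G H).Adj a b ↔ a ≠ b ∧
      ((a.1 = b.1 ∧ (∃ u : V, a.1 = Sum.inl u) ∧ H.Adj a.2 b.2) ∨
        (a.2 = b.2 ∧ (rGraph G).Adj a.1 b.1)) := by
  simp only [rSum, fSum, SimpleGraph.fromRel_adj]
  constructor
  · rintro ⟨hne, (⟨h1, ⟨u, hu⟩, h3⟩ | ⟨h1, h2⟩) | (⟨h1, ⟨u, hu⟩, h3⟩ | ⟨h1, h2⟩)⟩
    · exact ⟨hne, Or.inl ⟨h1, ⟨u, hu⟩, h3⟩⟩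
    · exact ⟨hne, Or.inr ⟨h1, h2⟩⟩
    · exact ⟨hne, Or.inl ⟨h1.symm, ⟨u, h1 ▸ hu⟩, h3.symm⟩⟩
    · exact ⟨hne, Or.inr ⟨h1.symm, h2.symm⟩⟩
  · rintro ⟨hne, h⟩
    exact ⟨hne, Or.inl h⟩

/-- if `G` is `k`-degenerate and `H` is `l`-degenerate (`k, l ≥ 1`),
then `G +_R H` is `(k + l)`-degenerate. -/
theorem stmt8 {V W : Type*} [Fintype V] [Fintype W]
    (k l : ℕ) (hk : 1 ≤ k) (hl : 1 ≤ l) (G : SimpleGraph V) (H : SimpleGraph W)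
    (hG : Degenerate k G) (hH : Degenerate l H) :
    Degenerate (k + l) (rSum G H) := by
  intro s hs
  by_cases hE : ∃ b ∈ s, ∃ e, b.1 = Sum.inr e
  · obtain ⟨b, hb, e, hbe⟩ := hE
    refine ⟨b, hb, ?_⟩
    obtain ⟨⟨x, y⟩, hxy⟩ := Quot.exists_rep (e : Sym2 V)
    calc (s.filter fun c => (rSum G H).Adj b c).card
        ≤ ({(Sum.inl x, b.2), (Sum.inl y, b.2)} :
            Finset ((V ⊕ ↥G.edgeSet) × W)).card := by
          apply Finset.card_le_card
          intro c hc
          rw [Finset.mem_filter] at hc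
          obtain ⟨hcs, hadj⟩ := hc
          rw [rSum_adj] at hadj
          obtain ⟨hne, (⟨h1, ⟨u, hu⟩, h3⟩ | ⟨h1, h2⟩)⟩ := hadj
          · rw [hbe] at hu; exact absurd hu (by simp)
          · rw [hbe, rGraph_adj_inr] at h2
            obtain ⟨u, hcu, hue⟩ := h2
            have : u = x ∨ u = y := by
              rw [← hxy] at hue; simpa using hue
            have hc2 : c = (c.1, c.2) := rfl
            rcases this with rfl | rfl <;>
              simp [Finset.mem_insert, Finset.mem_singleton, Prod.ext_iff, hcu, h1.symm]
      _ ≤ 2 := Finset.card_insert_le _ _ |>.trans (by simp)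
      _ ≤ k + l := by omega
  · push_neg at hE
    have hinl : ∀ b ∈ s, ∃ v : V, b.1 = Sum.inl v := by
      intro b hb
      cases hb1 : b.1 with
      | inl v => exact ⟨v, rfl⟩
      | inr e => exact absurd hb1 (hE b hb e)
    set T : Finset W := s.image Prod.snd with hT
    obtain ⟨w, hwT, hw⟩ := hH T (hs.image _)
    rw [hT, Finset.mem_image] at hwT
    obtain ⟨b0, hb0s, hb0w⟩ := hwT
    obtain ⟨v0, hv0⟩ := hinl b0 hb0s
    set f : (V ⊕ ↥G.edgeSet) → V := Sum.elim id (fun _ => v0) with hf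
    set sV : Finset V := (s.filter fun c => c.2 = w).image (fun c => f c.1) with hsV
    have hsVne : sV.Nonempty := ⟨v0, Finset.mem_image.mpr ⟨b0,
      Finset.mem_filter.mpr ⟨hb0s, hb0w⟩, by rw [hv0]; rfl⟩⟩
    obtain ⟨u, huV, hu⟩ := hG sV hsVne
    rw [hsV, Finset.mem_image] at huV
    obtain ⟨b, hbmem, hbu⟩ := huV
    rw [Finset.mem_filter] at hbmem
    obtain ⟨hbs, hbw⟩ := hbmem
    obtain ⟨v, hv⟩ := hinl b hbs
    have hbv : b.1 = Sum.inl u := by rw [hv] at hbu ⊢; simp [hf] at hbu; rw [hbu]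
    refine ⟨b, hbs, ?_⟩
    set A : Finset ((V ⊕ ↥G.edgeSet) × W) :=
      s.filter (fun c => c.1 = Sum.inl u ∧ H.Adj w c.2) with hA
    set B : Finset ((V ⊕ ↥G.edgeSet) × W) :=
      s.filter (fun c => c.2 = w ∧ ∃ v : V, c.1 = Sum.inl v ∧ G.Adj u v) with hB
    have hsub : (s.filter fun c => (rSum G H).Adj b c) ⊆ A ∪ B := by
      intro c hc
      rw [Finset.mem_filter] at hc
      obtain ⟨hcs, hadj⟩ := hc
      rw [rSum_adj] at hadj
      obtain ⟨hne, (⟨h1, _, h3⟩ | ⟨h1, h2⟩)⟩ := hadj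
      · refine Finset.mem_union_left _ (Finset.mem_filter.mpr ⟨hcs, ?_, ?_⟩)
        · rw [← h1, hbv]
        · rw [← hbw]; exact h3
      · obtain ⟨v', hv'⟩ := hinl c hcs
        rw [hbv, hv', rGraph_adj_inl_inl] at h2
        exact Finset.mem_union_right _ (Finset.mem_filter.mpr
          ⟨hcs, by rw [← h1, hbw], v', hv', h2⟩)
    have hAcard : A.card ≤ l := by
      have hinj : Set.InjOn Prod.snd (A : Set ((V ⊕ ↥G.edgeSet) × W)) := by
        intro c1 hc1 c2 hc2 h
        rw [hA, Finset.coe_filter] at hc1 hc2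
        obtain ⟨_, h1, _⟩ := hc1
        obtain ⟨_, h2, _⟩ := hc2
        exact Prod.ext (h1.trans h2.symm) h
      calc A.card = (A.image Prod.snd).card := (Finset.card_image_of_injOn hinj).symm
        _ ≤ (T.filter fun x => H.Adj w x).card := by
            apply Finset.card_le_card
            intro x hx
            rw [Finset.mem_image] at hx
            obtain ⟨c, hc, rfl⟩ := hx
            rw [hA, Finset.mem_filter] at hc
            exact Finset.mem_filter.mpr ⟨Finset.mem_image_of_mem _ hc.1, hc.2.2⟩
        _ ≤ l := hw
    have hBcard : B.card ≤ k := by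
      have hinj : Set.InjOn (fun c => f c.1) (B : Set ((V ⊕ ↥G.edgeSet) × W)) := by
        intro c1 hc1 c2 hc2 h
        rw [hB, Finset.coe_filter] at hc1 hc2
        obtain ⟨_, hw1, v1, hv1, _⟩ := hc1
        obtain ⟨_, hw2, v2, hv2, _⟩ := hc2
        simp only [hv1, hv2, hf, Sum.elim_inl, id] at h
        exact Prod.ext (by rw [hv1, hv2, h]) (hw1.trans hw2.symm)
      calc B.card = (B.image fun c => f c.1).card := (Finset.card_image_of_injOn hinj).symm
        _ ≤ (sV.filter fun x => G.Adj u x).card := by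
            apply Finset.card_le_card
            intro x hx
            rw [Finset.mem_image] at hx
            obtain ⟨c, hc, rfl⟩ := hx
            rw [hB, Finset.mem_filter] at hc
            obtain ⟨hcs, hcw, v', hv', hadj⟩ := hc
            refine Finset.mem_filter.mpr ⟨Finset.mem_image.mpr
              ⟨c, Finset.mem_filter.mpr ⟨hcs, hcw⟩, rfl⟩, ?_⟩
            simp only [hv', hf, Sum.elim_inl, id]
            exact hadj
        _ ≤ k := hu
    calc (s.filter fun c => (rSum G H).Adj b c).card
        ≤ (A ∪ B).card := Finset.card_le_card hsub
      _ ≤ A.card + B.card := Finset.card_union_le _ _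
      _ ≤ l + k := Nat.add_le_add hAcard hBcard
      _ = k + l := Nat.add_comm _ _
end

section
/- Let k and l be positive integers, let G be a k-degenerate graph and H an l-degenerate graph. Then AT(G +_R H) ≤ k + l + 1. -/
open scoped Classical

/-!
A vertex `(e, w)` of `G +_R H` coming from an edge `e = uv` of `G` has only the two neighbours
`(u, w)` and `(v, w)`, while the original vertices span a copy of the Cartesian product `G □ H`,
which is `(k + l)`-degenerate: take `u` of degree at most `k` in the projection to `G`, then `w`
of degree at most `l` in the fibre over `u`. Hence `G +_R H` is `(k + l)`-degenerate. Orienting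
the edges of a `d`-degenerate graph along a degeneracy ordering gives maximum outdegree `d` and no
directed cycles, so the empty subdigraph is its only Eulerian one and the orientation is
Alon–Tarsi; thus `AT ≤ d + 1`.
-/

section

open Finset

variable {V : Type*}

theorem Degenerate.exists_injOn_rank {d : ℕ} {G : SimpleGraph V} (hG : Degenerate d G)
    (s : Finset V) :
    ∃ f : V → ℕ, Set.InjOn f s ∧ ∀ v ∈ s, #{u ∈ s | G.Adj v u ∧ f v < f u} ≤ d := by
  induction s using Finset.strongInduction with
  | _ s ih =>
    rcases s.eq_empty_or_nonempty with rfl | hs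
    · exact ⟨fun _ => 0, by simp, by simp⟩
    obtain ⟨v, hv, hv_deg⟩ := hG s hs
    obtain ⟨f, hf_inj, hf_deg⟩ := ih (s.erase v) (erase_ssubset hv)
    -- `v` gets the least rank, so all its neighbours in `s` lie above it
    set g : V → ℕ := fun u => if u = v then 0 else f u + 1
    have hg_pos {u : V} (hu : u ≠ v) : g u = f u + 1 := if_neg hu
    refine ⟨g, fun a ha b hb hab => ?_, fun w hw => ?_⟩
    · by_cases hav : a = v <;> by_cases hbv : b = v
      · exact hav.trans hbv.symm
      · simp [g, hav, hbv] at hab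
      · simp [g, hav, hbv] at hab
      · rw [hg_pos hav, hg_pos hbv] at hab
        exact hf_inj (mem_erase.2 ⟨hav, ha⟩) (mem_erase.2 ⟨hbv, hb⟩) (by omega)
    · by_cases hwv : w = v
      · subst hwv
        exact (card_le_card (monotone_filter_right _ fun _ _ hu => hu.1)).trans hv_deg
      · refine (card_le_card fun u hu => ?_).trans (hf_deg w (mem_erase.2 ⟨hwv, hw⟩))
        simp only [mem_filter, mem_erase] at hu ⊢
        have huv : u ≠ v := by rintro rfl; simp [g, hwv] at hu
        rw [hg_pos hwv, hg_pos huv] at hu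
        exact ⟨⟨huv, hu.1⟩, hu.2.1, by omega⟩

theorem IsEulerianSub.eq_empty_of_forall_lt {B : Finset (V × V)} (hB : IsEulerianSub B)
    (f : V → ℕ) (hf : ∀ a ∈ B, f a.1 < f a.2) : B = ∅ := by
  by_contra hne
  obtain ⟨v, hv, hv_max⟩ := (B.image Prod.snd).exists_max_image f
    ((nonempty_iff_ne_empty.2 hne).image _)
  -- an arc enters the highest head `v`, so by the Euler condition an arc leaves it upwards
  obtain ⟨a, ha, rfl⟩ := mem_image.1 hv
  have h_in : 0 < arcInDeg B a.2 := card_pos.2 ⟨a, mem_filter.2 ⟨ha, rfl⟩⟩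
  obtain ⟨b, hb⟩ := card_pos.1 (hB a.2 ▸ h_in : 0 < arcOutDeg B a.2)
  obtain ⟨hbB, hba⟩ := mem_filter.1 hb
  exact (hba ▸ hf b hbB).not_ge (hv_max b.2 (mem_image_of_mem _ hbB))

theorem isATOrientation_of_forall_lt {A : Finset (V × V)} (f : V → ℕ)
    (hf : ∀ a ∈ A, f a.1 < f a.2) : IsATOrientation A := by
  have h_empty {B : Finset (V × V)} (hBA : B ∈ A.powerset) (hB : IsEulerianSub B) : B = ∅ :=
    hB.eq_empty_of_forall_lt f fun a ha => hf a (mem_powerset.1 hBA ha)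
  have h_even : {B ∈ A.powerset | IsEulerianSub B ∧ Even #B} = {∅} := by
    ext B
    simp only [mem_filter, mem_singleton]
    refine ⟨fun h => h_empty h.1 h.2.1, ?_⟩
    rintro rfl
    exact ⟨empty_mem_powerset A, fun v => by simp [arcInDeg, arcOutDeg], by simp⟩
  have h_odd : {B ∈ A.powerset | IsEulerianSub B ∧ ¬Even #B} = ∅ :=
    filter_eq_empty_iff.2 fun B hBA hB => by simp [h_empty hBA hB.1] at hB
  rw [IsATOrientation, h_even, h_odd]
  simp

section Rank

variable [Fintype V]

noncomputable def rankOrientation (G : SimpleGraph V) (f : V → ℕ) : Finset (V × V) :=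
  {a | G.Adj a.1 a.2 ∧ f a.1 < f a.2}

variable {G : SimpleGraph V} {f : V → ℕ}

@[simp]
theorem mem_rankOrientation {a : V × V} :
    a ∈ rankOrientation G f ↔ G.Adj a.1 a.2 ∧ f a.1 < f a.2 := by
  simp [rankOrientation]

theorem isOrientation_rankOrientation (hf : ∀ u v, G.Adj u v → f u ≠ f v) :
    IsOrientation G (rankOrientation G f) := by
  refine ⟨fun a ha => (mem_rankOrientation.1 ha).1, fun u v huv => ?_⟩
  have := hf u v huv
  simp only [mem_rankOrientation, huv, huv.symm, true_and]
  omega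

theorem arcOutDeg_rankOrientation (v : V) :
    arcOutDeg (rankOrientation G f) v = #{u | G.Adj v u ∧ f v < f u} :=
  card_nbij' Prod.snd (Prod.mk v)
    (fun a ha => by obtain ⟨h, rfl⟩ := mem_filter.1 ha; simpa using h)
    (fun u hu => by simpa [arcOutDeg] using hu)
    (fun a ha => by obtain ⟨-, rfl⟩ := mem_filter.1 ha; rfl) fun _ _ => rfl

end Rank

theorem alonTarsiNumber_le_of_degenerate [Fintype V] {d : ℕ} {G : SimpleGraph V}
    (hG : Degenerate d G) : alonTarsiNumber G ≤ d + 1 := by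
  obtain ⟨f, hf_inj, hf_deg⟩ := hG.exists_injOn_rank univ
  refine Nat.sInf_le ⟨rankOrientation G f, ?_, ?_, fun v => ?_⟩
  · exact isOrientation_rankOrientation fun u v huv h =>
      huv.ne (hf_inj (mem_coe.2 (mem_univ u)) (mem_coe.2 (mem_univ v)) h)
  · exact isATOrientation_of_forall_lt f fun a ha => (mem_rankOrientation.1 ha).2
  · rw [arcOutDeg_rankOrientation]
    exact Nat.lt_succ_of_le (hf_deg v (mem_univ v))

theorem Degenerate.boxProd {W : Type*} {k l : ℕ} {G : SimpleGraph V} {H : SimpleGraph W}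
    (hG : Degenerate k G) (hH : Degenerate l H) : Degenerate (k + l) (G □ H) := by
  intro s hs
  obtain ⟨u, hu, hu_deg⟩ := hG (s.image Prod.fst) (hs.image _)
  set t : Finset W := s.preimage (Prod.mk u) (Prod.mk_right_injective u).injOn
  have ht : t.Nonempty := by
    obtain ⟨⟨_, w⟩, hp, rfl⟩ := mem_image.1 hu
    exact ⟨w, mem_preimage.2 hp⟩
  obtain ⟨w, hw, hw_deg⟩ := hH t ht
  refine ⟨(u, w), mem_preimage.1 hw, ?_⟩
  calc #{p ∈ s | (G □ H).Adj (u, w) p}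
      ≤ #(({u' ∈ s.image Prod.fst | G.Adj u u'}.image (·, w)) ∪
          {w' ∈ t | H.Adj w w'}.image (Prod.mk u)) := by
        refine card_le_card fun ⟨u', w'⟩ hp => ?_
        obtain ⟨hp, ⟨hadj, rfl⟩ | ⟨hadj, rfl⟩⟩ := by simpa [SimpleGraph.boxProd_adj] using hp
        · exact mem_union_left _ (mem_image_of_mem _ (mem_filter.2
            ⟨mem_image_of_mem _ hp, hadj⟩))
        · exact mem_union_right _ (mem_image_of_mem _ (mem_filter.2
            ⟨mem_preimage.2 hp, hadj⟩))
    _ ≤ k + l := (card_union_le _ _).trans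
        (add_le_add (card_image_le.trans hu_deg) (card_image_le.trans hw_deg))

theorem Degenerate.exists_of_subset_range {V' : Type*} {d : ℕ} {G : SimpleGraph V}
    {K : SimpleGraph V'} (hG : Degenerate d G) (φ : G ↪g K) {s : Finset V'}
    (hs : s.Nonempty) (hsφ : ∀ x ∈ s, x ∈ Set.range φ) :
    ∃ x ∈ s, #{y ∈ s | K.Adj x y} ≤ d := by
  set t := s.preimage φ φ.injective.injOn
  have ht : t.Nonempty := by
    obtain ⟨x, hx⟩ := hs
    obtain ⟨v, rfl⟩ := hsφ x hx
    exact ⟨v, mem_preimage.2 hx⟩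
  obtain ⟨v, hv, hv_deg⟩ := hG t ht
  refine ⟨φ v, mem_preimage.1 hv, (card_le_card fun y hy => ?_).trans
    ((card_image_le (f := φ)).trans hv_deg)⟩
  obtain ⟨hys, hadj⟩ := mem_filter.1 hy
  obtain ⟨u, rfl⟩ := hsφ y hys
  exact mem_image_of_mem _ (mem_filter.2 ⟨mem_preimage.2 hys, φ.map_adj_iff.1 hadj⟩)

section RSum

variable {W : Type*} {G : SimpleGraph V} {H : SimpleGraph W}

theorem rSum_adj_inl_inl {u u' : V} {w w' : W} :
    (rSum G H).Adj (Sum.inl u, w) (Sum.inl u', w') ↔ (G □ H).Adj (u, w) (u', w') := by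
  simp only [rSum, fSum, rGraph, SimpleGraph.fromRel_adj, SimpleGraph.boxProd_adj]
  constructor
  · rintro ⟨-, (⟨huu, -, hH⟩ | ⟨rfl, -, hG | hG⟩) | (⟨huu, -, hH⟩ | ⟨rfl, -, hG | hG⟩)⟩ <;>
      simp_all [G.adj_comm, H.adj_comm]
  · rintro (⟨hG, rfl⟩ | ⟨hH, rfl⟩)
    · simp [hG, hG.ne]
    · simp [hH, hH.ne]

theorem rSum_adj_inr {e : G.edgeSet} {w : W} {b : (V ⊕ G.edgeSet) × W}
    (h : (rSum G H).Adj (Sum.inr e, w) b) : ∃ u ∈ (e : Sym2 V), b = (Sum.inl u, w) := by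
  obtain ⟨u | f, w'⟩ := b
  · obtain ⟨rfl, hu⟩ | ⟨rfl, hu⟩ := by simpa [rSum, fSum, rGraph] using h
    all_goals exact ⟨u, hu, rfl⟩
  · simp [rSum, fSum, rGraph] at h

def boxProdEmbeddingRSum (G : SimpleGraph V) (H : SimpleGraph W) :
    (G □ H : SimpleGraph (V × W)) ↪g rSum G H where
  toFun p := (Sum.inl p.1, p.2)
  inj' _ _ h := by simpa [Prod.ext_iff] using h
  map_rel_iff' := rSum_adj_inl_inl

theorem card_filter_rSum_adj_inr_le_two (s : Finset ((V ⊕ G.edgeSet) × W)) (e : G.edgeSet)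
    (w : W) : #{b ∈ s | (rSum G H).Adj (Sum.inr e, w) b} ≤ 2 := by
  obtain ⟨⟨x, y⟩, hxy⟩ := (e : Sym2 V).exists_rep
  refine (card_le_card fun b hb => ?_).trans (card_le_two (a := (Sum.inl x, w))
    (b := (Sum.inl y, w)))
  obtain ⟨u, hu, rfl⟩ := rSum_adj_inr (mem_filter.1 hb).2
  rw [← hxy, Sym2.mem_iff] at hu
  rcases hu with rfl | rfl <;> simp

theorem rSum_degenerate {k l : ℕ} (hkl : 2 ≤ k + l) (hG : Degenerate k G)
    (hH : Degenerate l H) : Degenerate (k + l) (rSum G H) := by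
  intro s hs
  by_cases h_edge : ∃ p ∈ s, ∃ e : G.edgeSet, p.1 = Sum.inr e
  · obtain ⟨⟨_, w⟩, hp, e, rfl⟩ := h_edge
    exact ⟨_, hp, (card_filter_rSum_adj_inr_le_two s e w).trans hkl⟩
  · refine (hG.boxProd hH).exists_of_subset_range (boxProdEmbeddingRSum G H) hs fun p hp => ?_
    obtain ⟨u | e, w⟩ := p
    · exact ⟨(u, w), rfl⟩
    · exact absurd ⟨_, hp, e, rfl⟩ h_edge

end RSum

end

/-- if `G` is `k`-degenerate and `H` is `l`-degenerate (`k, l ≥ 1`),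
then `AT(G +_R H) ≤ k + l + 1`. -/
theorem stmt9 {V W : Type*} [Fintype V] [Fintype W]
    (k l : ℕ) (hk : 1 ≤ k) (hl : 1 ≤ l) (G : SimpleGraph V) (H : SimpleGraph W)
    (hG : Degenerate k G) (hH : Degenerate l H) :
    alonTarsiNumber (rSum G H) ≤ k + l + 1 :=
  alonTarsiNumber_le_of_degenerate (rSum_degenerate (by omega) hG hH)
end
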